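/- arXiv:1609.08585 — 5 statements merged into one kernel-verified Lean document; each statement's English description precedes it below -/
import Mathlib

section
/- Let π be an orthogonal representation of G on a real Hilbert space H. The set Z¹(G,π) of 1-cocycles b : G → H is a real vector space that is complete with respect to the Hilbert norm ‖b‖_{L²(μ)} := (∫_G ‖b(x)‖² dμ(x))^{1/2}, and this norm is equivalent to the norm ‖b‖_Q := sup_{g ∈ Q} ‖b(g)‖: there exist constants 0 < c₁ ≤ c₂ (depending only on G, Q, μ, π) such that c₁ ‖b‖_Q ≤ ‖b‖_{L²(μ)} ≤ c₂ ‖b‖_Q for every 1-cocycle b. -/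
/-!
A cocycle satisfies `‖b (g * x)‖ ≤ ‖b g‖ + ‖b x‖`, so `‖b x‖ ≤ |x|_G ‖b‖_Q`, and the second moment
of `μ` bounds the `L²(μ)`-norm by `‖b‖_Q`. Conversely, integrating
`‖b g‖² ≤ 2 ‖b (g * x)‖² + 2 ‖b x‖²` in `x` over an open set `A` with `A ∪ g • A ⊆ Q`, where
`dμ/dm ≥ ε`, and using the left invariance of `m` bounds `‖b g‖²` by `4 / (ε m(A))` times
`∫ ‖b‖² dμ`; such an `A` serves a whole neighbourhood of `e`, and subadditivity spreads the bound
to every compact set. Hence an `L²(μ)`-Cauchy sequence of cocycles converges locally uniformly, its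
limit is a continuous cocycle, and the first bound turns uniform convergence on `Q` into
`L²(μ)`-convergence.
-/

open MeasureTheory Filter Topology
open scoped RealInnerProductSpace ENNReal Pointwise Classical

noncomputable section

variable {G : Type*} [Group G] [TopologicalSpace G] [IsTopologicalGroup G]
  [LocallyCompactSpace G] [MeasurableSpace G] [BorelSpace G]

/-- The word length `|x|_G` associated to the generating set `Q`. -/
noncomputable def wordLength (Q : Set G) (x : G) : ℕ :=
  if x = 1 then 0 else sInf {n : ℕ | 1 ≤ n ∧ x ∈ Q ^ n}

/-- Convolution of two measures on `G`. -/
noncomputable def mconv (μ ν : MeasureTheory.Measure G) : MeasureTheory.Measure G :=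
  (μ.prod ν).map fun p => p.1 * p.2

/-- The `n`-fold convolution power `μ^{*n}`. -/
noncomputable def convPow (μ : MeasureTheory.Measure G) : ℕ → MeasureTheory.Measure G
  | 0 => MeasureTheory.Measure.dirac 1
  | n + 1 => mconv (convPow μ n) μ

/-- The standing assumptions ("Convention") on `G`, `Q`, the Haar measure `m`
and the probability measure `μ`. -/
structure Convention (Q : Set G) (m μ : MeasureTheory.Measure G) : Prop where
  relCompact : IsCompact (closure Q)
  qsymm : Q⁻¹ = Q
  genNbhd : ∃ U : Set G, IsOpen U ∧ (1 : G) ∈ U ∧ U ⊆ Q ∧ Subgroup.closure U = ⊤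
  haar : m.IsHaarMeasure
  prob : IsProbabilityMeasure μ
  msymm : μ.map (fun x => x⁻¹) = μ
  ac : μ.AbsolutelyContinuous m
  lowerBound : ∃ ε : ℝ≥0∞, 0 < ε ∧ ∀ x ∈ Q, ε ≤ μ.rnDeriv m x
  moments : ∀ d : ℕ, ∫⁻ x, (wordLength Q x : ℝ≥0∞) ^ d ∂μ < ⊤

variable {H : Type*} [NormedAddCommGroup H] [InnerProductSpace ℝ H]

/-- `b : G → H` is a continuous `1`-cocycle for the orthogonal representation `π`. -/
def IsCocycle (π : G →* (H ≃ₗᵢ[ℝ] H)) (b : G → H) : Prop :=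
  Continuous b ∧ ∀ g x : G, b (g * x) = b g + π g (b x)

/-- `b` is a `1`-coboundary. -/
def IsCoboundary (π : G →* (H ≃ₗᵢ[ℝ] H)) (b : G → H) : Prop :=
  ∃ v : H, ∀ x : G, b x = v - π x v

/-- The subspace `K` is invariant under the representation `π`. -/
def IsInvariantSub (π : G →* (H ≃ₗᵢ[ℝ] H)) (K : Submodule ℝ H) : Prop :=
  ∀ g : G, ∀ v ∈ K, π g v ∈ K

/-- `P` is the orthogonal projection of `H` onto `K`. -/
def IsOrthProj (K : Submodule ℝ H) (P : H →ₗ[ℝ] H) : Prop :=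
  ∀ v : H, P v ∈ K ∧ v - P v ∈ Kᗮ

section Cocycle

-- Each section redeclares `G` with only the structure its lemmas use.
variable {G : Type*} [Group G] [TopologicalSpace G] {π : G →* (H ≃ₗᵢ[ℝ] H)} {b : G → H}

theorem IsCocycle.map_one (hb : IsCocycle π b) : b 1 = 0 := by
  simpa using hb.2 1 1

theorem IsCocycle.norm_mul_le (hb : IsCocycle π b) (g x : G) :
    ‖b (g * x)‖ ≤ ‖b g‖ + ‖b x‖ := by
  rw [hb.2 g x, ← (π g).norm_map (b x)]
  exact norm_add_le _ _

theorem IsCocycle.norm_inv (hb : IsCocycle π b) (g : G) : ‖b g⁻¹‖ = ‖b g‖ := by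
  have h := hb.2 g g⁻¹
  rw [mul_inv_cancel, hb.map_one, eq_comm, add_eq_zero_iff_eq_neg] at h
  rw [← (π g).norm_map, h, norm_neg]

theorem IsCocycle.norm_sq_le (hb : IsCocycle π b) (g x : G) :
    ‖b g‖ ^ 2 ≤ 2 * ‖b (g * x)‖ ^ 2 + 2 * ‖b x‖ ^ 2 := by
  have h : ‖b g‖ ≤ ‖b (g * x)‖ + ‖b x‖ := by
    simpa [hb.norm_inv] using hb.norm_mul_le (g * x) x⁻¹
  nlinarith [norm_nonneg (b g), sq_nonneg (‖b (g * x)‖ - ‖b x‖)]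

theorem IsCocycle.norm_le_of_mem_pow (hb : IsCocycle π b) {S : Set G} {B : ℝ}
    (hS : ∀ g ∈ S, ‖b g‖ ≤ B) : ∀ n : ℕ, ∀ g ∈ S ^ n, ‖b g‖ ≤ n * B
  | 0, g, hg => by simp [Set.mem_one.mp hg, hb.map_one]
  | n + 1, _, hg => by
    obtain ⟨g, hg', s, hs, rfl⟩ := Set.mem_mul.mp (pow_succ S n ▸ hg)
    calc ‖b (g * s)‖ ≤ ‖b g‖ + ‖b s‖ := hb.norm_mul_le g s
      _ ≤ n * B + B := add_le_add (hb.norm_le_of_mem_pow hS n g hg') (hS s hs)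
      _ = (n + 1 : ℕ) * B := by push_cast; ring

theorem IsCocycle.norm_le_wordLength_mul (hb : IsCocycle π b) {Q : Set G}
    (hQ : ∀ x : G, ∃ n, x ∈ Q ^ n) {B : ℝ} (hB : ∀ g ∈ Q, ‖b g‖ ≤ B) (x : G) :
    ‖b x‖ ≤ wordLength Q x * B := by
  by_cases hx : x = 1
  · simp [hx, wordLength, hb.map_one]
  obtain ⟨n, hn⟩ := hQ x
  have hne : {n : ℕ | 1 ≤ n ∧ x ∈ Q ^ n}.Nonempty := by
    refine ⟨n, Nat.one_le_iff_ne_zero.mpr ?_, hn⟩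
    rintro rfl
    exact hx (Set.mem_one.mp hn)
  rw [wordLength, if_neg hx]
  exact hb.norm_le_of_mem_pow hB _ x (Nat.sInf_mem hne).2

theorem IsCocycle.add {b₁ b₂ : G → H} (h₁ : IsCocycle π b₁) (h₂ : IsCocycle π b₂) :
    IsCocycle π (fun g => b₁ g + b₂ g) :=
  ⟨h₁.1.add h₂.1, fun g x => by simp only [h₁.2 g x, h₂.2 g x, map_add]; abel⟩

theorem IsCocycle.sub {b₁ b₂ : G → H} (h₁ : IsCocycle π b₁) (h₂ : IsCocycle π b₂) :
    IsCocycle π (fun g => b₁ g - b₂ g) :=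
  ⟨h₁.1.sub h₂.1, fun g x => by simp only [h₁.2 g x, h₂.2 g x, map_sub]; abel⟩

theorem IsCocycle.smul (hb : IsCocycle π b) (r : ℝ) : IsCocycle π (fun g => r • b g) :=
  ⟨hb.1.const_smul r, fun g x => by simp only [hb.2 g x, smul_add, map_smul]⟩

end Cocycle

section Generation

variable {G : Type*} [Group G]

theorem exists_mem_pow_of_closure_eq_top {U Q : Set G} (hUQ : U ⊆ Q)
    (hQinv : Q⁻¹ = Q) (hU : Subgroup.closure U = ⊤) (x : G) : ∃ n, x ∈ Q ^ n := by
  induction (hU ▸ Subgroup.mem_top x : x ∈ Subgroup.closure U)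
    using Subgroup.closure_induction with
  | mem u hu => exact ⟨1, by simpa using hUQ hu⟩
  | one => exact ⟨0, Set.mem_one.mpr rfl⟩
  | mul x y _ _ hx hy =>
    obtain ⟨n, hn⟩ := hx
    obtain ⟨k, hk⟩ := hy
    exact ⟨n + k, pow_add Q n k ▸ Set.mul_mem_mul hn hk⟩
  | inv x _ hx =>
    obtain ⟨n, hn⟩ := hx
    exact ⟨n, by rwa [← hQinv, inv_pow, Set.inv_mem_inv]⟩

theorem IsCompact.pow [TopologicalSpace G] [ContinuousMul G] {K : Set G} (hK : IsCompact K) :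
    ∀ n : ℕ, IsCompact (K ^ n)
  | 0 => by simp
  | n + 1 => by rw [pow_succ]; exact (hK.pow n).mul hK

theorem sigmaCompactSpace_of_mem_pow [TopologicalSpace G] [ContinuousMul G] {Q : Set G}
    (hQ : IsCompact (closure Q)) (hcover : ∀ x : G, ∃ n, x ∈ Q ^ n) : SigmaCompactSpace G :=
  ⟨⟨fun n => closure Q ^ n, hQ.pow, Set.eq_univ_of_forall fun x => Set.mem_iUnion.mpr <|
    (hcover x).imp fun _ hn => Set.pow_subset_pow_left subset_closure hn⟩⟩

end Generation

theorem mul_setLIntegral_le_setLIntegral_of_le_rnDeriv {α : Type*} [MeasurableSpace α]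
    {m μ : Measure α} [μ.HaveLebesgueDecomposition m] (hac : μ ≪ m) {ε : ℝ≥0∞} {B : Set α}
    (hB : MeasurableSet B) (hε : ∀ x ∈ B, ε ≤ μ.rnDeriv m x) {f : α → ℝ≥0∞}
    (hf : Measurable f) :
    ε * ∫⁻ x in B, f x ∂m ≤ ∫⁻ x in B, f x ∂μ := by
  conv_rhs => rw [← Measure.withDensity_rnDeriv_eq μ m hac]
  rw [restrict_withDensity hB,
    lintegral_withDensity_eq_lintegral_mul _ (Measure.measurable_rnDeriv μ m) hf,
    ← lintegral_const_mul _ hf]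
  exact setLIntegral_mono' hB fun x hx => mul_le_mul_left (hε x hx) _

section L2Bounded

variable {G : Type*} [Group G] [TopologicalSpace G] [MeasurableSpace G]
  {π : G →* (H ≃ₗᵢ[ℝ] H)} {μ : Measure G} {S T : Set G}

-- Only square-integrable cocycles are constrained: for the others the Bochner integral is `0`.
def CocyclesL2BoundedOn (π : G →* (H ≃ₗᵢ[ℝ] H)) (μ : Measure G) (S : Set G) : Prop :=
  ∃ C, 0 ≤ C ∧ ∀ b, IsCocycle π b → Integrable (fun x => ‖b x‖ ^ 2) μ →
    ∀ g ∈ S, ‖b g‖ ≤ C * √(∫ x, ‖b x‖ ^ 2 ∂μ)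

namespace CocyclesL2BoundedOn

theorem mono (hT : CocyclesL2BoundedOn π μ T) (hST : S ⊆ T) : CocyclesL2BoundedOn π μ S :=
  let ⟨C, hC, h⟩ := hT
  ⟨C, hC, fun b hb hbL2 g hg => h b hb hbL2 g (hST hg)⟩

theorem union (hS : CocyclesL2BoundedOn π μ S) (hT : CocyclesL2BoundedOn π μ T) :
    CocyclesL2BoundedOn π μ (S ∪ T) := by
  obtain ⟨C, hC, hS⟩ := hS
  obtain ⟨D, hD, hT⟩ := hT
  refine ⟨max C D, hC.trans (le_max_left C D), fun b hb hbL2 g hg => ?_⟩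
  rcases hg with hg | hg
  · exact (hS b hb hbL2 g hg).trans (by gcongr; exact le_max_left C D)
  · exact (hT b hb hbL2 g hg).trans (by gcongr; exact le_max_right C D)

theorem mul (hS : CocyclesL2BoundedOn π μ S) (hT : CocyclesL2BoundedOn π μ T) :
    CocyclesL2BoundedOn π μ (S * T) := by
  obtain ⟨C, hC, hS⟩ := hS
  obtain ⟨D, hD, hT⟩ := hT
  refine ⟨C + D, add_nonneg hC hD, ?_⟩
  rintro b hb hbL2 _ ⟨g, hg, h, hh, rfl⟩
  calc ‖b (g * h)‖ ≤ ‖b g‖ + ‖b h‖ := hb.norm_mul_le g h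
    _ ≤ C * √(∫ x, ‖b x‖ ^ 2 ∂μ) + D * √(∫ x, ‖b x‖ ^ 2 ∂μ) :=
      add_le_add (hS b hb hbL2 g hg) (hT b hb hbL2 h hh)
    _ = (C + D) * √(∫ x, ‖b x‖ ^ 2 ∂μ) := (add_mul C D _).symm

theorem inv (hS : CocyclesL2BoundedOn π μ S) : CocyclesL2BoundedOn π μ S⁻¹ :=
  let ⟨C, hC, h⟩ := hS
  ⟨C, hC, fun b hb hbL2 g hg => hb.norm_inv g ▸ inv_inv g ▸ h b hb hbL2 g⁻¹ hg⟩

theorem one : CocyclesL2BoundedOn π μ {1} :=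
  ⟨0, le_rfl, fun b hb _ g hg => by simp [Set.mem_singleton_iff.mp hg, hb.map_one]⟩

theorem of_finite (hS : S.Finite) (h : ∀ g ∈ S, CocyclesL2BoundedOn π μ {g}) :
    CocyclesL2BoundedOn π μ S := by
  induction S, hS using Set.Finite.induction_on with
  | empty => exact one.mono (Set.empty_subset _)
  | @insert g S _ _ ih =>
    rw [Set.insert_eq]
    exact (h g (Set.mem_insert g S)).union (ih fun x hx => h x (Set.mem_insert_of_mem g hx))

theorem univ_of_closure_eq_top {U : Set G} (hU : Subgroup.closure U = ⊤)
    (h : ∀ u ∈ U, CocyclesL2BoundedOn π μ {u}) (g : G) : CocyclesL2BoundedOn π μ {g} := by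
  induction (hU ▸ Subgroup.mem_top g : g ∈ Subgroup.closure U)
    using Subgroup.closure_induction with
  | mem u hu => exact h u hu
  | one => exact one
  | mul x y _ _ hx hy => simpa using hx.mul hy
  | inv x _ hx => simpa using hx.inv

theorem of_isCompact [ContinuousMul G] (hpt : ∀ g : G, CocyclesL2BoundedOn π μ {g})
    {W : Set G} (hWo : IsOpen W) (hW1 : (1 : G) ∈ W) (hW : CocyclesL2BoundedOn π μ W)
    {K : Set G} (hK : IsCompact K) : CocyclesL2BoundedOn π μ K := by
  obtain ⟨t, -, ht, hKt⟩ := hK.elim_finite_subcover_image (c := fun g => g • W)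
    (fun g _ => hWo.smul g) fun x hx => Set.mem_biUnion hx ⟨1, hW1, mul_one x⟩
  refine ((of_finite ht fun g _ => hpt g).mul hW).mono fun x hx => ?_
  obtain ⟨g, hg, w, hw, rfl⟩ := Set.mem_iUnion₂.mp (hKt hx)
  exact Set.mul_mem_mul hg hw

theorem uniformCauchySeqOn (hS : CocyclesL2BoundedOn π μ S) {bseq : ℕ → G → H}
    (hcoc : ∀ k, IsCocycle π (bseq k))
    (hint : ∀ p q, Integrable (fun x => ‖bseq p x - bseq q x‖ ^ 2) μ)
    (hcau : ∀ ε : ℝ, 0 < ε → ∃ N : ℕ, ∀ p q : ℕ, N ≤ p → N ≤ q →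
      ∫ x, ‖bseq p x - bseq q x‖ ^ 2 ∂μ < ε) :
    UniformCauchySeqOn bseq atTop S := by
  obtain ⟨C, hC, hS⟩ := hS
  refine Metric.uniformCauchySeqOn_iff.mpr fun ε hε => ?_
  obtain ⟨N, hN⟩ := hcau ((ε / (C + 1)) ^ 2) (by positivity)
  refine ⟨N, fun p hp q hq g hg => ?_⟩
  have hsqrt : √(∫ x, ‖bseq p x - bseq q x‖ ^ 2 ∂μ) < ε / (C + 1) :=
    (Real.sqrt_lt' (by positivity)).mpr (hN p q hp hq)
  calc dist (bseq p g) (bseq q g)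
      ≤ C * √(∫ x, ‖bseq p x - bseq q x‖ ^ 2 ∂μ) :=
        (dist_eq_norm _ _).trans_le (hS _ ((hcoc p).sub (hcoc q)) (hint p q) g hg)
    _ ≤ C * (ε / (C + 1)) := by gcongr
    _ < ε := by
      rw [mul_div_assoc', div_lt_iff₀ (by positivity)]
      nlinarith

end CocyclesL2BoundedOn

end L2Bounded

section LocalBound

variable {G : Type*} [Group G] [TopologicalSpace G] [MeasurableSpace G] [OpensMeasurableSpace G]
  [MeasurableMul G] {π : G →* (H ≃ₗᵢ[ℝ] H)} {b : G → H}

theorem IsCocycle.mul_measure_mul_ofReal_norm_sq_le (hb : IsCocycle π b) {m μ : Measure G}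
    [m.IsMulLeftInvariant] [μ.HaveLebesgueDecomposition m] (hac : μ ≪ m) {ε : ℝ≥0∞}
    {A : Set G} (hA : MeasurableSet A) (g : G) (hεA : ∀ x ∈ A, ε ≤ μ.rnDeriv m x)
    (hεgA : ∀ x ∈ g • A, ε ≤ μ.rnDeriv m x) :
    ε * m A * ENNReal.ofReal (‖b g‖ ^ 2) ≤ 4 * ∫⁻ x, ENNReal.ofReal (‖b x‖ ^ 2) ∂μ := by
  set F : G → ℝ≥0∞ := fun x => ENNReal.ofReal (‖b x‖ ^ 2)
  have hF : Measurable F := (ENNReal.continuous_ofReal.comp (hb.1.norm.pow 2)).measurable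
  have hFg : ∀ x, F g ≤ 2 * F (g * x) + 2 * F x := fun x => by
    have h := ENNReal.ofReal_le_ofReal (hb.norm_sq_le g x)
    rwa [ENNReal.ofReal_add (by positivity) (by positivity), ENNReal.ofReal_mul zero_le_two,
      ENNReal.ofReal_mul zero_le_two, ENNReal.ofReal_ofNat] at h
  have hFmul : Measurable fun x => F (g * x) := hF.comp (measurable_const_mul g)
  have htranslate : ∫⁻ x in A, F (g * x) ∂m = ∫⁻ x in g • A, F x ∂m := by
    rw [(measurePreserving_mul_left m g).setLIntegral_comp_emb (measurableEmbedding_mulLeft g),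
      ← Set.image_smul]
    rfl
  calc ε * m A * F g = ε * ∫⁻ _ in A, F g ∂m := by
        rw [setLIntegral_const, mul_assoc, mul_comm (F g)]
    _ ≤ ε * ∫⁻ x in A, (2 * F (g * x) + 2 * F x) ∂m := by gcongr; exact hFg _
    _ = 2 * (ε * ∫⁻ x in g • A, F x ∂m) + 2 * (ε * ∫⁻ x in A, F x ∂m) := by
      rw [lintegral_add_left (hFmul.const_mul 2), lintegral_const_mul _ hFmul,
        lintegral_const_mul _ hF, htranslate]
      ring
    _ ≤ 2 * ∫⁻ x in g • A, F x ∂μ + 2 * ∫⁻ x in A, F x ∂μ := by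
      gcongr
      · exact mul_setLIntegral_le_setLIntegral_of_le_rnDeriv hac (hA.const_smul g) hεgA hF
      · exact mul_setLIntegral_le_setLIntegral_of_le_rnDeriv hac hA hεA hF
    _ ≤ 2 * ∫⁻ x, F x ∂μ + 2 * ∫⁻ x, F x ∂μ := by
      gcongr <;> exact Measure.restrict_le_self
    _ = 4 * ∫⁻ x, F x ∂μ := by ring

theorem cocyclesL2BoundedOn_of_smul_subset {m μ : Measure G} [m.IsMulLeftInvariant]
    [μ.HaveLebesgueDecomposition m] (hac : μ ≪ m) {ε : ℝ≥0∞} (hε0 : ε ≠ 0) (hεtop : ε ≠ ⊤)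
    {R A S : Set G} (hR : ∀ x ∈ R, ε ≤ μ.rnDeriv m x) (hA : MeasurableSet A) (hA0 : m A ≠ 0)
    (hAtop : m A ≠ ⊤) (hAR : A ⊆ R) (hSA : ∀ g ∈ S, g • A ⊆ R) :
    CocyclesL2BoundedOn π μ S := by
  set c := (ε * m A).toReal
  have hc : 0 < c := ENNReal.toReal_pos (mul_ne_zero hε0 hA0) (ENNReal.mul_ne_top hεtop hAtop)
  refine ⟨√(4 / c), Real.sqrt_nonneg _, fun b hb hbL2 g hg => ?_⟩
  have hI : 0 ≤ ∫ x, ‖b x‖ ^ 2 ∂μ := integral_nonneg fun x => by positivity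
  have hloc := hb.mul_measure_mul_ofReal_norm_sq_le hac hA g (fun x hx => hR x (hAR hx))
    fun x hx => hR x (hSA g hg hx)
  rw [← ofReal_integral_eq_lintegral_ofReal hbL2 (ae_of_all _ fun x => by positivity)] at hloc
  have hreal : c * ‖b g‖ ^ 2 ≤ 4 * ∫ x, ‖b x‖ ^ 2 ∂μ := by
    simpa [c, ENNReal.toReal_mul, hI] using
      ENNReal.toReal_mono (ENNReal.mul_ne_top (by simp) ENNReal.ofReal_ne_top) hloc
  calc ‖b g‖ = √(‖b g‖ ^ 2) := (Real.sqrt_sq (norm_nonneg _)).symm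
    _ ≤ √(4 / c * ∫ x, ‖b x‖ ^ 2 ∂μ) := by
      gcongr
      rw [div_mul_eq_mul_div, le_div_iff₀ hc]
      linarith
    _ = √(4 / c) * √(∫ x, ‖b x‖ ^ 2 ∂μ) := Real.sqrt_mul (by positivity) _

end LocalBound

theorem Continuous.norm_le_iSup_of_isCompact_closure {X E : Type*} [TopologicalSpace X]
    [SeminormedAddGroup E] {f : X → E} (hf : Continuous f) {Q : Set X}
    (hQ : IsCompact (closure Q)) {x : X} (hx : x ∈ Q) : ‖f x‖ ≤ ⨆ y : Q, ‖f y‖ :=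
  le_ciSup ((hQ.image hf.norm).bddAbove.mono
    (Set.range_subset_iff.mpr fun y : Q => Set.mem_image_of_mem _ (subset_closure y.2))) ⟨x, hx⟩

section L2Norm

variable {G : Type*} [Group G] [TopologicalSpace G] [MeasurableSpace G]
  {π : G →* (H ≃ₗᵢ[ℝ] H)} {b : G → H} {Q : Set G} {m μ : Measure G}

theorem IsCocycle.lintegral_norm_sq_le (hb : IsCocycle π b) (hQ : ∀ x : G, ∃ n, x ∈ Q ^ n)
    {B : ℝ} (hB : ∀ g ∈ Q, ‖b g‖ ≤ B) :
    ∫⁻ x, ENNReal.ofReal (‖b x‖ ^ 2) ∂μ ≤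
      ENNReal.ofReal (B ^ 2) * ∫⁻ x, (wordLength Q x : ℝ≥0∞) ^ 2 ∂μ := by
  rw [← lintegral_const_mul' _ _ ENNReal.ofReal_ne_top]
  refine lintegral_mono fun x => ?_
  calc ENNReal.ofReal (‖b x‖ ^ 2) ≤ ENNReal.ofReal ((wordLength Q x * B) ^ 2) := by
        gcongr
        exact hb.norm_le_wordLength_mul hQ hB x
    _ = ENNReal.ofReal (B ^ 2) * (wordLength Q x : ℝ≥0∞) ^ 2 := by
        rw [mul_pow, mul_comm, ENNReal.ofReal_mul (sq_nonneg B),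
          ENNReal.ofReal_pow (Nat.cast_nonneg (wordLength Q x)), ENNReal.ofReal_natCast]

namespace Convention

theorem one_mem (hconv : Convention Q m μ) : (1 : G) ∈ Q :=
  let ⟨_, _, hU1, hUQ, _⟩ := hconv.genNbhd
  hUQ hU1

theorem exists_mem_pow (hconv : Convention Q m μ) (x : G) : ∃ n, x ∈ Q ^ n :=
  let ⟨_, _, _, hUQ, hU⟩ := hconv.genNbhd
  exists_mem_pow_of_closure_eq_top hUQ hconv.qsymm hU x

variable [OpensMeasurableSpace G]

theorem integral_norm_sq_le (hconv : Convention Q m μ) (hb : IsCocycle π b) {B : ℝ}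
    (hB : ∀ g ∈ Q, ‖b g‖ ≤ B) :
    ∫ x, ‖b x‖ ^ 2 ∂μ ≤ (∫⁻ x, (wordLength Q x : ℝ≥0∞) ^ 2 ∂μ).toReal * B ^ 2 := by
  rw [integral_eq_lintegral_of_nonneg_ae (f := fun x => ‖b x‖ ^ 2)
    (ae_of_all _ fun x => by positivity) (hb.1.norm.pow 2).aestronglyMeasurable, mul_comm]
  simpa [ENNReal.toReal_mul, ENNReal.toReal_ofReal (sq_nonneg B)] using ENNReal.toReal_mono
    (ENNReal.mul_ne_top ENNReal.ofReal_ne_top (hconv.moments 2).ne)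
    (hb.lintegral_norm_sq_le hconv.exists_mem_pow hB)

theorem integrable_norm_sq (hconv : Convention Q m μ) (hb : IsCocycle π b) :
    Integrable (fun x => ‖b x‖ ^ 2) μ := by
  refine ⟨(hb.1.norm.pow 2).aestronglyMeasurable,
    (hasFiniteIntegral_iff_ofReal (ae_of_all _ fun x => by positivity)).mpr ?_⟩
  exact (hb.lintegral_norm_sq_le hconv.exists_mem_pow
    fun g hg => hb.1.norm_le_iSup_of_isCompact_closure hconv.relCompact hg).trans_lt
    (ENNReal.mul_lt_top ENNReal.ofReal_lt_top (hconv.moments 2))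

theorem tendsto_integral_norm_sub_sq (hconv : Convention Q m μ) {bseq : ℕ → G → H}
    {blim : G → H} (hcoc : ∀ k, IsCocycle π (bseq k)) (hblim : IsCocycle π blim)
    (hunif : TendstoUniformlyOn bseq blim atTop Q) :
    Tendsto (fun k => ∫ x, ‖bseq k x - blim x‖ ^ 2 ∂μ) atTop (𝓝 0) := by
  set M := (∫⁻ x, (wordLength Q x : ℝ≥0∞) ^ 2 ∂μ).toReal
  refine Metric.tendsto_nhds.mpr fun δ hδ => ?_
  have hη : 0 < √(δ / (M + 1)) := Real.sqrt_pos.mpr (by positivity)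
  filter_upwards [Metric.tendstoUniformlyOn_iff.mp hunif _ hη] with k hk
  have hI := hconv.integral_norm_sq_le ((hcoc k).sub hblim)
    fun g hg => by rw [← dist_eq_norm']; exact (hk g hg).le
  rw [Real.sq_sqrt (by positivity)] at hI
  rw [Real.dist_0_eq_abs, abs_of_nonneg (integral_nonneg fun x => by positivity)]
  calc _ ≤ M * (δ / (M + 1)) := hI
    _ < δ := by
      rw [mul_div_assoc', div_lt_iff₀ (by positivity)]
      nlinarith

variable [IsTopologicalGroup G] [BorelSpace G]

theorem cocyclesL2BoundedOn_of_isOpen (hconv : Convention Q m μ) {A S : Set G}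
    (hAo : IsOpen A) (hAne : A.Nonempty) (hAQ : A ⊆ Q) (hSA : ∀ g ∈ S, g • A ⊆ Q) :
    CocyclesL2BoundedOn π μ S := by
  have := hconv.haar
  have := hconv.prob
  have := sigmaCompactSpace_of_mem_pow hconv.relCompact hconv.exists_mem_pow
  obtain ⟨ε, hε0, hε⟩ := hconv.lowerBound
  exact cocyclesL2BoundedOn_of_smul_subset hconv.ac (lt_min hε0 zero_lt_one).ne'
    (min_lt_of_right_lt ENNReal.one_lt_top).ne (fun x hx => (min_le_left ε 1).trans (hε x hx))
    hAo.measurableSet (hAo.measure_ne_zero m hAne)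
    ((measure_mono (hAQ.trans subset_closure)).trans_lt hconv.relCompact.measure_lt_top).ne
    hAQ hSA

theorem cocyclesL2BoundedOn_of_isCompact (hconv : Convention Q m μ) {K : Set G}
    (hK : IsCompact K) : CocyclesL2BoundedOn π μ K := by
  obtain ⟨U, hUo, hU1, hUQ, hU⟩ := hconv.genNbhd
  obtain ⟨W, hWo, hW1, hWU⟩ := exists_open_nhds_one_mul_subset (hUo.mem_nhds hU1)
  have hWsubU : W ⊆ U := fun w hw => hWU ⟨w, hw, 1, hW1, mul_one w⟩
  refine .of_isCompact (.univ_of_closure_eq_top hU fun u hu => ?_) hWo hW1 ?_ hK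
  · refine hconv.cocyclesL2BoundedOn_of_isOpen (hUo.inter (hUo.smul u⁻¹)) ⟨1, hU1, ?_⟩
      (Set.inter_subset_left.trans hUQ) fun g hg => ?_
    · simpa [Set.mem_smul_set_iff_inv_smul_mem] using hu
    · rw [Set.mem_singleton_iff.mp hg]
      exact (Set.smul_set_mono Set.inter_subset_right).trans (by simpa using hUQ)
  · exact hconv.cocyclesL2BoundedOn_of_isOpen hWo ⟨1, hW1⟩ (hWsubU.trans hUQ)
      fun w hw => ((Set.smul_set_subset_smul hw).trans hWU).trans hUQ

theorem exists_cocycle_tendsto [LocallyCompactSpace G] [CompleteSpace H]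
    (hconv : Convention Q m μ) {bseq : ℕ → G → H} (hcoc : ∀ k, IsCocycle π (bseq k))
    (hcau : ∀ ε : ℝ, 0 < ε → ∃ N : ℕ, ∀ p q : ℕ, N ≤ p → N ≤ q →
      ∫ x, ‖bseq p x - bseq q x‖ ^ 2 ∂μ < ε) :
    ∃ blim : G → H, IsCocycle π blim ∧
      Tendsto (fun k => ∫ x, ‖bseq k x - blim x‖ ^ 2 ∂μ) atTop (𝓝 0) := by
  have hcauchy (K : Set G) (hK : IsCompact K) : UniformCauchySeqOn bseq atTop K :=
    (hconv.cocyclesL2BoundedOn_of_isCompact hK).uniformCauchySeqOn hcoc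
      (fun p q => hconv.integrable_norm_sq ((hcoc p).sub (hcoc q))) hcau
  set blim : G → H := fun g => limUnder atTop fun k => bseq k g
  have hlim (g : G) : Tendsto (fun k => bseq k g) atTop (𝓝 (blim g)) :=
    ((hcauchy {g} isCompact_singleton).cauchySeq rfl).tendsto_limUnder
  have hunif (K : Set G) (hK : IsCompact K) : TendstoUniformlyOn bseq blim atTop K :=
    (hcauchy K hK).tendstoUniformlyOn_of_tendsto fun g _ => hlim g
  have hblim : IsCocycle π blim := by
    refine ⟨(tendstoLocallyUniformly_iff_forall_isCompact.mpr hunif).continuous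
      (Frequently.of_forall fun k => (hcoc k).1), fun g x => tendsto_nhds_unique (hlim (g * x)) ?_⟩
    simp_rw [(hcoc _).2 g x]
    exact (hlim g).add (((π g).continuous.tendsto _).comp (hlim x))
  exact ⟨blim, hblim, hconv.tendsto_integral_norm_sub_sq hcoc hblim
    ((hunif _ hconv.relCompact).mono subset_closure)⟩

theorem exists_norm_equiv (hconv : Convention Q m μ) :
    ∃ c₁ c₂ : ℝ, 0 < c₁ ∧ c₁ ≤ c₂ ∧ ∀ b : G → H, IsCocycle π b →
      c₁ * (⨆ g : Q, ‖b (g : G)‖) ≤ √(∫ x, ‖b x‖ ^ 2 ∂μ) ∧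
      √(∫ x, ‖b x‖ ^ 2 ∂μ) ≤ c₂ * (⨆ g : Q, ‖b (g : G)‖) := by
  obtain ⟨C, hC, hbound⟩ := hconv.cocyclesL2BoundedOn_of_isCompact (π := π) hconv.relCompact
  set M := (∫⁻ x, (wordLength Q x : ℝ≥0∞) ^ 2 ∂μ).toReal
  refine ⟨(C + 1)⁻¹, max (C + 1)⁻¹ √M, by positivity, le_max_left _ _, fun b hb => ⟨?_, ?_⟩⟩
  · have hsup : (⨆ g : Q, ‖b g‖) ≤ C * √(∫ x, ‖b x‖ ^ 2 ∂μ) :=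
      Real.iSup_le (fun g => hbound b hb (hconv.integrable_norm_sq hb) g (subset_closure g.2))
        (by positivity)
    rw [inv_mul_le_iff₀ (by positivity)]
    nlinarith [Real.sqrt_nonneg (∫ x, ‖b x‖ ^ 2 ∂μ)]
  · have hle (g : G) (hg : g ∈ Q) : ‖b g‖ ≤ ⨆ g : Q, ‖b g‖ :=
      hb.1.norm_le_iSup_of_isCompact_closure hconv.relCompact hg
    have hsup_nonneg : 0 ≤ ⨆ g : Q, ‖b g‖ := (norm_nonneg _).trans (hle 1 hconv.one_mem)
    calc √(∫ x, ‖b x‖ ^ 2 ∂μ) ≤ √(M * (⨆ g : Q, ‖b g‖) ^ 2) :=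
          Real.sqrt_le_sqrt (hconv.integral_norm_sq_le hb hle)
      _ = √M * ⨆ g : Q, ‖b g‖ := by rw [Real.sqrt_mul' _ (sq_nonneg _), Real.sqrt_sq hsup_nonneg]
      _ ≤ _ := by gcongr; exact le_max_right _ _

end Convention

end L2Norm

theorem stmt_4_general (Q : Set G) (m μ : MeasureTheory.Measure G) (hconv : Convention Q m μ)
    [CompleteSpace H]
    (π : G →* (H ≃ₗᵢ[ℝ] H)) :
    (∀ b₁ b₂ : G → H, IsCocycle π b₁ → IsCocycle π b₂ →
        IsCocycle π (fun g => b₁ g + b₂ g)) ∧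
    (∀ (r : ℝ) (b : G → H), IsCocycle π b → IsCocycle π (fun g => r • b g)) ∧
    (∀ bseq : ℕ → G → H, (∀ k, IsCocycle π (bseq k)) →
      (∀ ε : ℝ, 0 < ε → ∃ N : ℕ, ∀ p q : ℕ, N ≤ p → N ≤ q →
          ∫ x, ‖bseq p x - bseq q x‖ ^ 2 ∂μ < ε) →
      ∃ blim : G → H, IsCocycle π blim ∧
        Filter.Tendsto (fun k : ℕ => ∫ x, ‖bseq k x - blim x‖ ^ 2 ∂μ) Filter.atTop (𝓝 0)) ∧
    (∃ c₁ c₂ : ℝ, 0 < c₁ ∧ c₁ ≤ c₂ ∧ ∀ b : G → H, IsCocycle π b →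
      c₁ * (⨆ g : Q, ‖b (g : G)‖) ≤ Real.sqrt (∫ x, ‖b x‖ ^ 2 ∂μ) ∧
      Real.sqrt (∫ x, ‖b x‖ ^ 2 ∂μ) ≤ c₂ * (⨆ g : Q, ‖b (g : G)‖)) :=
  ⟨fun _ _ h₁ h₂ => h₁.add h₂, fun r _ hb => hb.smul r,
    fun _ hcoc hcau => hconv.exists_cocycle_tendsto hcoc hcau, hconv.exists_norm_equiv⟩

/-- The space `Z¹(G,π)` of `1`-cocycles is a real vector space, complete for
the Hilbert norm `‖·‖_{L²(μ)}`, and this norm is equivalent to `‖·‖_Q`. -/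
theorem stmt_4 (Q : Set G) (m μ : MeasureTheory.Measure G) (hconv : Convention Q m μ)
    [CompleteSpace H]
    (π : G →* (H ≃ₗᵢ[ℝ] H)) (hπ : ∀ v : H, Continuous fun g : G => π g v) :
    (∀ b₁ b₂ : G → H, IsCocycle π b₁ → IsCocycle π b₂ →
        IsCocycle π (fun g => b₁ g + b₂ g)) ∧
    (∀ (r : ℝ) (b : G → H), IsCocycle π b → IsCocycle π (fun g => r • b g)) ∧
    (∀ bseq : ℕ → G → H, (∀ k, IsCocycle π (bseq k)) →
      (∀ ε : ℝ, 0 < ε → ∃ N : ℕ, ∀ p q : ℕ, N ≤ p → N ≤ q →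
          ∫ x, ‖bseq p x - bseq q x‖ ^ 2 ∂μ < ε) →
      ∃ blim : G → H, IsCocycle π blim ∧
        Filter.Tendsto (fun k : ℕ => ∫ x, ‖bseq k x - blim x‖ ^ 2 ∂μ) Filter.atTop (𝓝 0)) ∧
    (∃ c₁ c₂ : ℝ, 0 < c₁ ∧ c₁ ≤ c₂ ∧ ∀ b : G → H, IsCocycle π b →
      c₁ * (⨆ g : Q, ‖b (g : G)‖) ≤ Real.sqrt (∫ x, ‖b x‖ ^ 2 ∂μ) ∧
      Real.sqrt (∫ x, ‖b x‖ ^ 2 ∂μ) ≤ c₂ * (⨆ g : Q, ‖b (g : G)‖)) :=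
  stmt_4_general Q m μ hconv π

end
end

section
/- Let G be a group with a length function |·|_G : G → ℝ≥0 (i.e. |e|_G = 0, |x^{-1}|_G = |x|_G and |xy|_G ≤ |x|_G + |y|_G), let N be a normal subgroup of G with a length function |·|_N : N → ℝ≥0 (satisfying the same axioms on N), and suppose there is a constant C ≥ 1 such that (1/C)·log(|h|_N + 1) − C ≤ |h|_G ≤ C·log(|h|_N + 1) + C for all h ∈ N. Define |gN| := inf{|gh|_G : h ∈ N}. Then there exists a constant D ≥ 1 such that for every n ≥ 1 and all s₁, …, s_n ∈ G with |s_i|_G ≤ 1, setting g_k := s₁ s₂ ⋯ s_k and M_n := max_{1 ≤ k ≤ n} |g_k N|, one has max_{1 ≤ k ≤ n} |g_k|_G ≤ D·(M_n + log n + 1). -/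
open Filter

noncomputable section

/-- The product `s₁ s₂ ⋯ s_k` of the first `k` increments. -/
def prodUpTo {G : Type*} [Group G] (s : ℕ → G) (k : ℕ) : G :=
  ((List.range k).map fun i => s (i + 1)).prod

/-- The length of the coset `gN` induced by a length function `len` on `G`:
`|gN| = inf {|gh|_G : h ∈ N}`. -/
noncomputable def cosetLen {G : Type*} [Group G] (len : G → ℝ) (N : Subgroup G) (g : G) : ℝ :=
  sInf {r : ℝ | ∃ h ∈ N, r = len (g * h)}

lemma prodUpTo_succ {G : Type*} [Group G] (s : ℕ → G) (k : ℕ) :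
    prodUpTo s (k + 1) = prodUpTo s k * s (k + 1) := by
  simp [prodUpTo, List.range_succ]

set_option maxHeartbeats 1600000 in
/-- If `N ◁ G` is strictly exponentially distorted, then there is `D ≥ 1`
such that `max_{k ≤ n} |g_k|_G ≤ D (M_n + log n + 1)` for any word `g_k = s₁ ⋯ s_k` with
increments of length at most `1`, where `M_n = max_{1 ≤ k ≤ n} |g_k N|`. -/
theorem stmt_11 {G : Type*} [Group G]
    (len : G → ℝ) (hnn : ∀ x : G, 0 ≤ len x) (h1 : len 1 = 0)
    (hinv : ∀ x : G, len x⁻¹ = len x) (hsub : ∀ x y : G, len (x * y) ≤ len x + len y)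
    (N : Subgroup G) (hN : N.Normal)
    (lenN : N → ℝ) (hnnN : ∀ h : N, 0 ≤ lenN h) (h1N : lenN 1 = 0)
    (hinvN : ∀ h : N, lenN h⁻¹ = lenN h)
    (hsubN : ∀ h h' : N, lenN (h * h') ≤ lenN h + lenN h')
    (C : ℝ) (hC : 1 ≤ C)
    (hdistort : ∀ h : N, (1 / C) * Real.log (lenN h + 1) - C ≤ len (h : G) ∧
        len (h : G) ≤ C * Real.log (lenN h + 1) + C) :
    ∃ D : ℝ, 1 ≤ D ∧ ∀ n : ℕ, 1 ≤ n → ∀ s : ℕ → G, (∀ i : ℕ, len (s i) ≤ 1) →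
      ∀ k : ℕ, 1 ≤ k → k ≤ n →
        len (prodUpTo s k) ≤
          D * (sSup {r : ℝ | ∃ j : ℕ, 1 ≤ j ∧ j ≤ n ∧ r = cosetLen len N (prodUpTo s j)}
            + Real.log n + 1) := by
  classical
  have hCpos : (0:ℝ) < C := lt_of_lt_of_le one_pos hC
  refine ⟨4 * C ^ 3 + 4, by nlinarith [pow_pos hCpos 3], ?_⟩
  intro n hn s hs k hk1 hkn
  set g : ℕ → G := prodUpTo s with hgdef
  have hg0 : g 0 = 1 := by simp [hgdef, prodUpTo]
  have hgsucc : ∀ j, g (j + 1) = g j * s (j + 1) := fun j => prodUpTo_succ s j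
  have hglen : ∀ j : ℕ, len (g j) ≤ j := by
    intro j; induction j with
    | zero => simp [hg0, h1]
    | succ j ih =>
      have h2 := hs (j + 1)
      calc len (g (j+1)) ≤ len (g j) + len (s (j+1)) := by rw [hgsucc]; exact hsub _ _
      _ ≤ (j:ℝ) + 1 := by linarith
      _ = ((j+1 : ℕ) : ℝ) := by push_cast; ring
  have hSne : ∀ x : G, ({r : ℝ | ∃ h ∈ N, r = len (x * h)}).Nonempty := by
    intro x; exact ⟨len x, 1, N.one_mem, by simp⟩
  have hSbdd : ∀ x : G, BddBelow {r : ℝ | ∃ h ∈ N, r = len (x * h)} := by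
    intro x; exact ⟨0, fun r ⟨h, _, hr⟩ => hr ▸ hnn _⟩
  have hclnn : ∀ x : G, 0 ≤ cosetLen len N x :=
    fun x => le_csInf (hSne x) (fun r ⟨h, _, hr⟩ => hr ▸ hnn _)
  have hclle : ∀ x : G, cosetLen len N x ≤ len x := by
    intro x
    exact csInf_le (hSbdd x) ⟨1, N.one_mem, by simp⟩
  set M : ℝ := sSup {r : ℝ | ∃ j : ℕ, 1 ≤ j ∧ j ≤ n ∧ r = cosetLen len N (g j)} with hMdef
  have hTbdd : BddAbove {r : ℝ | ∃ j : ℕ, 1 ≤ j ∧ j ≤ n ∧ r = cosetLen len N (g j)} := by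
    refine ⟨n, fun r hr => ?_⟩
    obtain ⟨j, hj1, hjn, hr⟩ := hr
    calc r = cosetLen len N (g j) := hr
    _ ≤ len (g j) := hclle _
    _ ≤ j := hglen j
    _ ≤ n := by exact_mod_cast hjn
  have hMk : ∀ j : ℕ, 1 ≤ j → j ≤ n → cosetLen len N (g j) ≤ M := by
    intro j hj1 hjn; exact le_csSup hTbdd ⟨j, hj1, hjn, rfl⟩
  have hM0 : 0 ≤ M := (hclnn (g k)).trans (hMk k hk1 hkn)
  -- choose coset representatives
  have hcex : ∀ j : ℕ, ∃ c : N, (j ≤ n → len (g j * (c : G)) ≤ M + 1) := by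
    intro j
    rcases Nat.eq_zero_or_pos j with hj0 | hj1
    · refine ⟨1, fun _ => ?_⟩
      subst hj0
      simp [hg0, h1]
      linarith
    · by_cases hjn : j ≤ n
      · have hlt : sInf {r : ℝ | ∃ h ∈ N, r = len (g j * h)} < M + 1 :=
          lt_of_le_of_lt (hMk j hj1 hjn) (by linarith)
        obtain ⟨r, hrmem, hrlt⟩ := exists_lt_of_csInf_lt (hSne (g j)) hlt
        obtain ⟨h, hhN, hr⟩ := hrmem
        exact ⟨⟨h, hhN⟩, fun _ => by rw [← hr]; exact le_of_lt hrlt⟩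
      · exact ⟨1, fun hcon => absurd hcon hjn⟩
  choose c hc using hcex
  set h : ℕ → N := fun j => ⟨g j * (c j : G) * (g j)⁻¹, hN.conj_mem _ (c j).2 _⟩ with hhdef
  have hhg : ∀ j, ((h j : G)) * g j = g j * (c j : G) := by
    intro j
    show (g j * (c j : G) * (g j)⁻¹) * g j = g j * (c j : G)
    group
  have hq : ∀ j : ℕ, j ≤ n → len ((h j : G) * g j) ≤ M + 1 := by
    intro j hjn; rw [hhg]; exact hc j hjn
  -- lower distortion: short in G implies controlled in N
  have hlow : ∀ (w : N) (b : ℝ), len (w : G) ≤ b → lenN w ≤ Real.exp (C * (b + C)) - 1 := by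
    intro w b hb
    have h1' := (hdistort w).1
    have hlog : Real.log (lenN w + 1) ≤ C * (b + C) := by
      have h2 : (1/C) * Real.log (lenN w + 1) ≤ b + C := by linarith
      calc Real.log (lenN w + 1) = C * ((1/C) * Real.log (lenN w + 1)) := by field_simp
      _ ≤ C * (b + C) := mul_le_mul_of_nonneg_left h2 (le_of_lt hCpos)
    have hpos : 0 < lenN w + 1 := by have := hnnN w; linarith
    have h2 : lenN w + 1 ≤ Real.exp (C * (b + C)) := by
      calc lenN w + 1 = Real.exp (Real.log (lenN w + 1)) := (Real.exp_log hpos).symm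
      _ ≤ _ := Real.exp_le_exp.mpr hlog
    linarith
  set E : ℝ := Real.exp (C * (2*M+3+C)) with hEdef
  have hE1 : 1 ≤ E := Real.one_le_exp (by nlinarith)
  -- telescoping increments
  have hwlen : ∀ j : ℕ, j + 1 ≤ n →
      len ((h (j+1) * (h j)⁻¹ : N) : G) ≤ 2 * M + 3 := by
    intro j hjn
    have hco : ((h (j+1) * (h j)⁻¹ : N) : G)
        = ((h (j+1) : G) * g (j+1)) * (s (j+1))⁻¹ * ((h j : G) * g j)⁻¹ := by
      push_cast
      rw [hgsucc j]
      group
    rw [hco]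
    have b1 := hq (j+1) hjn
    have b2 := hq j (le_trans (Nat.le_succ j) hjn)
    have b3 : len ((s (j+1))⁻¹) ≤ 1 := by rw [hinv]; exact hs (j+1)
    have t1 := hsub ((h (j+1):G) * g (j+1) * (s (j+1))⁻¹) (((h j:G) * g j)⁻¹)
    have t2 := hsub ((h (j+1):G) * g (j+1)) ((s (j+1))⁻¹)
    rw [hinv] at t1
    linarith
  have hwN : ∀ j, j + 1 ≤ n → lenN (h (j+1) * (h j)⁻¹) ≤ E - 1 :=
    fun j hj => hlow _ _ (hwlen j hj)
  have hh0 : lenN (h 0) ≤ E - 1 := by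
    apply hlow _ (2*M+3)
    have h0n : (0:ℕ) ≤ n := Nat.zero_le n
    have := hq 0 h0n
    rw [hg0, mul_one] at this
    linarith
  have hind : ∀ j : ℕ, j ≤ n → lenN (h j) ≤ ((j:ℝ)+1) * (E-1) := by
    intro j
    induction j with
    | zero => intro _; simpa using hh0
    | succ j ih =>
      intro hjn
      have hid : h (j+1) = (h (j+1) * (h j)⁻¹) * h j := by group
      have hsb := hsubN (h (j+1) * (h j)⁻¹) (h j)
      rw [← hid] at hsb
      have h1'' := hwN j hjn
      have h2'' := ih (le_trans (Nat.le_succ j) hjn)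
      have hE0 : (0:ℝ) ≤ E - 1 := by linarith
      push_cast
      push_cast at h2''
      nlinarith
  -- upper distortion on h k
  have hhk := hind k hkn
  have hup := (hdistort (h k)).2
  have hposk : (0:ℝ) < lenN (h k) + 1 := by have := hnnN (h k); linarith
  have hn' : (1:ℝ) ≤ n := by exact_mod_cast hn
  have hle2 : lenN (h k) + 1 ≤ 2 * n * E := by
    have hkr : (k:ℝ) ≤ n := by exact_mod_cast hkn
    nlinarith
  have hlogle : Real.log (lenN (h k) + 1) ≤ Real.log 2 + Real.log n + C*(2*M+3+C) := by
    have hm := Real.log_le_log hposk hle2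
    have hnne : (n:ℝ) ≠ 0 := by positivity
    have hEpos : (0:ℝ) < E := by linarith
    rw [Real.log_mul (by positivity) (ne_of_gt hEpos), Real.log_mul (by norm_num) hnne,
      Real.log_exp] at hm
    linarith
  have hlenhk : len ((h k : G)) ≤ C * (Real.log 2 + Real.log n + C*(2*M+3+C)) + C := by
    have := mul_le_mul_of_nonneg_left hlogle (le_of_lt hCpos)
    linarith
  have hfin : len (g k) ≤ len ((h k : G)) + (M + 1) := by
    have hid : g k = ((h k : G))⁻¹ * ((h k : G) * g k) := by group
    calc len (g k) = len (((h k:G))⁻¹ * ((h k:G) * g k)) := by rw [← hid]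
    _ ≤ len (((h k:G))⁻¹) + len ((h k:G) * g k) := hsub _ _
    _ ≤ len ((h k:G)) + (M+1) := by rw [hinv]; linarith [hq k hkn]
  have hlog2 : Real.log 2 ≤ 1 := by
    have := Real.log_le_sub_one_of_pos (by norm_num : (0:ℝ) < 2); linarith
  have hlogn : 0 ≤ Real.log n := Real.log_nonneg hn'
  have hlog2' : 0 ≤ Real.log 2 := Real.log_nonneg (by norm_num)
  show len (g k) ≤ (4*C^3+4) * (M + Real.log n + 1)
  have hC2 : C^2 ≤ C^3 := by nlinarith [mul_le_mul_of_nonneg_left hC (sq_nonneg C)]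
  have hC1 : C ≤ C^2 := by nlinarith [mul_le_mul_of_nonneg_left hC (le_of_lt hCpos)]
  have hA : (0:ℝ) ≤ (C - 1) * (3*C^2 - 2) :=
    mul_nonneg (by linarith) (by nlinarith)
  have hB : C * Real.log 2 ≤ C * 1 := mul_le_mul_of_nonneg_left hlog2 (le_of_lt hCpos)
  nlinarith [hfin, hlenhk,
    mul_nonneg hM0 (by nlinarith [pow_pos hCpos 3] : (0:ℝ) ≤ 4*C^3+3-2*C^2),
    mul_nonneg hlogn (by nlinarith [pow_pos hCpos 3] : (0:ℝ) ≤ 4*C^3+4-C), hB, hA]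

end
end

section
/- Let N be a closed normal subgroup of G that is strictly exponentially distorted in G, and let μ̄ denote the pushforward of μ under the quotient homomorphism G → G/N. If the random walk (G/N, μ̄) is cautious with respect to the word length |·|_{G/N} induced by the compact generating set QN of G/N, then the random walk (G, μ) is cautious with respect to |·|_G. -/
/-!
Lift the walk through the quotient. If the image of `x_k = s₁ ⋯ s_k` in `G/N` has length at most
`b`, choose `u_k` of length at most `b` in the coset `x_k N`. The errors `h_k = x_k u_k⁻¹ ∈ N`
change at each step by `u_k s_{k+1} u_{k+1}⁻¹ ∈ N`, of word length at most `3b` once every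
increment has length at most `b`, hence of `N`-length `e^{O(b)}`. So `|h_k|_N ≤ (n + 1) e^{O(b)}`,
and exponential distortion gives `|x_k|_G = O(b + log n)`. With `b = c₁√n`, the walk on `G` stays
below `c√n` whenever the quotient walk stays below `c₁√n` and no increment is longer than
`c₁√n`; by Markov's inequality for the sixth moment, the latter fails with probability `O(1/n)`.
-/

open MeasureTheory Filter Topology
open scoped RealInnerProductSpace ENNReal Pointwise Classical

noncomputable section

variable {G : Type*} [Group G] [TopologicalSpace G] [IsTopologicalGroup G]
  [LocallyCompactSpace G] [MeasurableSpace G] [BorelSpace G]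

variable {H : Type*} [NormedAddCommGroup H] [InnerProductSpace ℝ H]

/-- The partial product `s₁ ⋯ s_k` of the first `k` coordinates of `s : Fin n → G`. -/
def pprodFin {n : ℕ} (s : Fin n → G) (k : ℕ) : G :=
  (((List.finRange n).take k).map s).prod

/-- The random walk `(G, μ)` is cautious with respect to the length function `len`. -/
def Cautious (μ : MeasureTheory.Measure G) [MeasureTheory.SigmaFinite μ]
    (len : G → ℝ) : Prop :=
  ∀ c : ℝ, 0 < c → 0 < Filter.limsup (fun n : ℕ =>
    MeasureTheory.Measure.pi (fun _ : Fin n => μ)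
      {s : Fin n → G | ∀ k : ℕ, 1 ≤ k → k ≤ n → len (pprodFin s k) < c * Real.sqrt n})
    Filter.atTop

/-- The word length on the quotient `G/N` induced by the compact generating set `QN`,
viewed as a function on `G`. -/
noncomputable def qWordLength (Q : Set G) (N : Subgroup G) (g : G) : ℕ :=
  if g ∈ N then 0 else sInf {k : ℕ | 1 ≤ k ∧ g ∈ Q ^ k * (N : Set G)}

section WordLength

variable {Γ : Type*} [Group Γ] {Q : Set Γ}

theorem exists_mem_pow_of_closure_eq_top_s12 (hQ : Q⁻¹ = Q) (h1 : (1 : Γ) ∈ Q)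
    (hgen : Subgroup.closure Q = ⊤) (x : Γ) : ∃ n, 1 ≤ n ∧ x ∈ Q ^ n := by
  have hx : x ∈ Subgroup.closure Q := hgen ▸ Subgroup.mem_top x
  induction hx using Subgroup.closure_induction with
  | mem x hx => exact ⟨1, le_rfl, by simpa using hx⟩
  | one => exact ⟨1, le_rfl, by simpa using h1⟩
  | mul x y _ _ hx hy =>
    obtain ⟨a, ha, hxa⟩ := hx
    obtain ⟨b, -, hyb⟩ := hy
    exact ⟨a + b, ha.trans (Nat.le_add_right a b), pow_add Q a b ▸ Set.mul_mem_mul hxa hyb⟩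
  | inv x _ hx =>
    obtain ⟨a, ha, hxa⟩ := hx
    exact ⟨a, ha, by rw [← hQ, inv_pow]; exact Set.inv_mem_inv.mpr hxa⟩

@[simp]
theorem wordLength_one : wordLength Q (1 : Γ) = 0 := if_pos rfl

theorem wordLength_le_of_mem_pow {x : Γ} {n : ℕ} (hx : x ∈ Q ^ n) : wordLength Q x ≤ n := by
  rcases Nat.eq_zero_or_pos n with rfl | hn
  · simp_all
  unfold wordLength
  split_ifs
  exacts [Nat.zero_le n, Nat.sInf_le ⟨hn, hx⟩]

theorem mem_pow_wordLength (hgen : ∀ x : Γ, ∃ n, 1 ≤ n ∧ x ∈ Q ^ n) (x : Γ) :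
    x ∈ Q ^ wordLength Q x := by
  unfold wordLength
  split_ifs with hx
  exacts [by simp [hx], (Nat.sInf_mem (hgen x)).2]

theorem wordLength_mul_le (hgen : ∀ x : Γ, ∃ n, 1 ≤ n ∧ x ∈ Q ^ n) (x y : Γ) :
    wordLength Q (x * y) ≤ wordLength Q x + wordLength Q y :=
  wordLength_le_of_mem_pow <| pow_add Q _ _ ▸
    Set.mul_mem_mul (mem_pow_wordLength hgen x) (mem_pow_wordLength hgen y)

theorem wordLength_inv_le (hQ : Q⁻¹ = Q) (hgen : ∀ x : Γ, ∃ n, 1 ≤ n ∧ x ∈ Q ^ n) (x : Γ) :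
    wordLength Q x⁻¹ ≤ wordLength Q x :=
  wordLength_le_of_mem_pow <| by
    have hx := Set.inv_mem_inv.mpr (mem_pow_wordLength hgen x)
    rwa [← inv_pow, hQ] at hx

theorem lt_wordLength_of_notMem_pow (h1 : (1 : Γ) ∈ Q) (hgen : ∀ x : Γ, ∃ n, 1 ≤ n ∧ x ∈ Q ^ n)
    {x : Γ} {j : ℕ} (hx : x ∉ Q ^ j) : j < wordLength Q x :=
  lt_of_not_ge fun hle => hx (Set.pow_subset_pow_right h1 hle (mem_pow_wordLength hgen x))

theorem exists_wordLength_le_qWordLength (hgen : ∀ x : Γ, ∃ n, 1 ≤ n ∧ x ∈ Q ^ n)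
    (N : Subgroup Γ) (g : Γ) : ∃ u, wordLength Q u ≤ qWordLength Q N g ∧ u⁻¹ * g ∈ N := by
  unfold qWordLength
  split_ifs with hg
  · exact ⟨1, by simp, by simpa using hg⟩
  have hne : {k | 1 ≤ k ∧ g ∈ Q ^ k * (N : Set Γ)}.Nonempty := by
    obtain ⟨k, hk, hgk⟩ := hgen g
    exact ⟨k, hk, g, hgk, 1, N.one_mem, mul_one g⟩
  obtain ⟨-, u, hu, h, hh, rfl⟩ := Nat.sInf_mem hne
  exact ⟨u, wordLength_le_of_mem_pow hu, by simpa using hh⟩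

end WordLength

theorem pprodFin_zero {Γ : Type*} [Group Γ] {n : ℕ} (s : Fin n → Γ) : pprodFin s 0 = 1 := by
  simp [pprodFin]

theorem inv_mul_pprodFin_succ {Γ : Type*} [Group Γ] {n : ℕ} (s : Fin n → Γ) {k : ℕ}
    (hk : k < n) : (pprodFin s k)⁻¹ * pprodFin s (k + 1) = s ⟨k, hk⟩ := by
  have hget : (List.finRange n)[k]? = some ⟨k, hk⟩ := by simp [hk]
  simp [pprodFin, List.take_add_one, hget]

theorem le_add_mul_of_forall_inv_mul_le {M : Type*} [Group M] {ℓ : M → ℝ}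
    (hℓ : ∀ a b, ℓ (a * b) ≤ ℓ a + ℓ b) (f : ℕ → M) {a : ℝ} {n : ℕ}
    (hstep : ∀ k < n, ℓ ((f k)⁻¹ * f (k + 1)) ≤ a) : ℓ (f n) ≤ ℓ (f 0) + n * a := by
  induction n with
  | zero => simp
  | succ n ih =>
    calc ℓ (f (n + 1)) = ℓ (f n * ((f n)⁻¹ * f (n + 1))) := by rw [mul_inv_cancel_left]
      _ ≤ ℓ (f n) + a := (hℓ _ _).trans (add_le_add_right (hstep n n.lt_succ_self) _)
      _ ≤ ℓ (f 0) + (n + 1 : ℕ) * a := by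
        push_cast; linarith [ih fun k hk => hstep k (hk.trans n.lt_succ_self)]

theorem isLittleO_log_add_one_sqrt : (fun x : ℝ => Real.log (x + 1)) =o[atTop] (√·) := by
  have hshift := (isLittleO_log_rpow_atTop one_half_pos).comp_tendsto
    (tendsto_atTop_add_const_right _ 1 tendsto_id)
  refine hshift.trans_isBigO (Asymptotics.IsBigO.of_bound 2 ?_)
  filter_upwards [eventually_ge_atTop 1] with x hx
  simp only [Function.comp, id, Real.norm_eq_abs, ← Real.sqrt_eq_rpow,
    abs_of_nonneg (Real.sqrt_nonneg _)]
  calc √(x + 1) ≤ √(2 ^ 2 * x) := Real.sqrt_le_sqrt (by linarith)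
    _ = 2 * √x := by rw [Real.sqrt_mul (by positivity), Real.sqrt_sq zero_le_two]

theorem eventually_mul_log_add_lt_mul_sqrt (A B : ℝ) {c : ℝ} (hc : 0 < c) :
    ∀ᶠ n : ℕ in atTop, A * Real.log (n + 1) + B < c * √n := by
  have hlin : (fun x : ℝ => A * Real.log (x + 1) + B) =o[atTop] (√·) :=
    (isLittleO_log_add_one_sqrt.const_mul_left A).add (Asymptotics.isLittleO_const_left.mpr
      (Or.inr (tendsto_norm_atTop_atTop.comp Real.tendsto_sqrt_atTop)))
  filter_upwards [(hlin.def (half_pos hc)).natCast_atTop, eventually_gt_atTop 0] with n hn hn0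
  have hsqrt : 0 < √(n : ℝ) := Real.sqrt_pos.mpr (by exact_mod_cast hn0)
  rw [Real.norm_eq_abs, Real.norm_eq_abs, abs_of_pos hsqrt] at hn
  linarith [le_abs_self (A * Real.log (n + 1) + B),
    mul_lt_mul_of_pos_right (half_lt_self hc) hsqrt]

section Distortion

variable {Γ : Type*} [Group Γ] {Q : Set Γ} {N : Subgroup Γ} {lenN : N → ℝ} {C : ℝ}

structure IsExpDistortedBy (Q : Set Γ) (N : Subgroup Γ) (lenN : N → ℝ) (C : ℝ) : Prop where
  nonneg : ∀ h, 0 ≤ lenN h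
  mul_le : ∀ h h', lenN (h * h') ≤ lenN h + lenN h'
  one_le : 1 ≤ C
  bounds : ∀ h : N,
    (1 / C) * Real.log (lenN h + 1) - C ≤ (wordLength Q (h : Γ) : ℝ) ∧
    (wordLength Q (h : Γ) : ℝ) ≤ C * Real.log (lenN h + 1) + C

namespace IsExpDistortedBy

theorem add_one_le_exp (hd : IsExpDistortedBy Q N lenN C) (h : N) {a : ℝ}
    (ha : (wordLength Q (h : Γ) : ℝ) ≤ a) : lenN h + 1 ≤ Real.exp (C * (a + C)) := by
  have hC : 0 < C := zero_lt_one.trans_le hd.one_le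
  rw [← Real.log_le_iff_le_exp (by linarith [hd.nonneg h])]
  have hlog := (hd.bounds h).1.trans ha
  rw [one_div] at hlog
  exact (inv_mul_le_iff₀ hC).mp (by linarith)

theorem wordLength_le_log (hd : IsExpDistortedBy Q N lenN C) (h : N) {a : ℝ}
    (ha : lenN h + 1 ≤ a) : (wordLength Q (h : Γ) : ℝ) ≤ C * Real.log a + C := by
  have hC : 0 < C := zero_lt_one.trans_le hd.one_le
  refine (hd.bounds h).2.trans ?_
  gcongr
  linarith [hd.nonneg h]

end IsExpDistortedBy

theorem wordLength_le_of_qWordLength_le (hN : N.Normal) (hd : IsExpDistortedBy Q N lenN C)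
    (hQ : Q⁻¹ = Q) (hgen : ∀ x : Γ, ∃ n, 1 ≤ n ∧ x ∈ Q ^ n) {x : ℕ → Γ} (hx0 : x 0 = 1) {n : ℕ} {b : ℝ}
    (hstep : ∀ k < n, (wordLength Q ((x k)⁻¹ * x (k + 1)) : ℝ) ≤ b)
    (hquot : ∀ k ≤ n, (qWordLength Q N (x k) : ℝ) ≤ b) {k : ℕ} (hk : k ≤ n) :
    (wordLength Q (x k) : ℝ) ≤ (3 * C ^ 2 + 1) * b + C * Real.log (n + 1) + C ^ 3 + C := by
  have hb : 0 ≤ b := (Nat.cast_nonneg _).trans (hquot 0 n.zero_le)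
  have hwl_mul (y z : Γ) : (wordLength Q (y * z) : ℝ) ≤ wordLength Q y + wordLength Q z := by
    exact_mod_cast wordLength_mul_le hgen y z
  have hwl_inv (y : Γ) : (wordLength Q y⁻¹ : ℝ) ≤ wordLength Q y := by
    exact_mod_cast wordLength_inv_le hQ hgen y
  choose u hu huN using exists_wordLength_le_qWordLength hgen N
  have hub (k : ℕ) (hk : k ≤ n) : (wordLength Q (u (x k)) : ℝ) ≤ b :=
    (Nat.cast_le.mpr (hu (x k))).trans (hquot k hk)
  let h (k : ℕ) : N := ⟨x k * (u (x k))⁻¹, by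
    simpa [mul_assoc] using hN.conj_mem _ (huN (x k)) (u (x k))⟩
  set E := Real.exp (C * (3 * b + C))
  have hh0 : lenN (h 0) + 1 ≤ E := by
    refine hd.add_one_le_exp (h 0) ?_
    have := (hwl_inv _).trans (hub 0 n.zero_le)
    simp only [h, hx0, one_mul] at this ⊢
    linarith
  have hsteps : ∀ j < n, lenN ((h j)⁻¹ * h (j + 1)) ≤ E - 1 := by
    intro j hj
    have hcoe : (((h j)⁻¹ * h (j + 1) : N) : Γ)
        = u (x j) * ((x j)⁻¹ * x (j + 1)) * (u (x (j + 1)))⁻¹ := by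
      simp [h, mul_assoc]
    refine le_sub_iff_add_le.mpr (hd.add_one_le_exp _ ?_)
    rw [hcoe]
    linarith [hwl_mul (u (x j) * ((x j)⁻¹ * x (j + 1))) (u (x (j + 1)))⁻¹,
      hwl_mul (u (x j)) ((x j)⁻¹ * x (j + 1)), hwl_inv (u (x (j + 1))),
      hub j hj.le, hstep j hj, hub (j + 1) hj]
  have hhk : lenN (h k) + 1 ≤ (n + 1) * E := by
    have := le_add_mul_of_forall_inv_mul_le hd.mul_le h fun j hj => hsteps j (hj.trans_le hk)
    have hkn : (k : ℝ) ≤ n := by exact_mod_cast hk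
    nlinarith [Real.add_one_le_exp (C * (3 * b + C)), Real.exp_pos (C * (3 * b + C))]
  have hlog : Real.log ((n + 1) * E) = Real.log (n + 1) + C * (3 * b + C) := by
    rw [Real.log_mul (by positivity) (Real.exp_pos _).ne', Real.log_exp]
  have hxk : x k = h k * u (x k) := by simp [h]
  calc (wordLength Q (x k) : ℝ) = wordLength Q ((h k : Γ) * u (x k)) := by rw [← hxk]
    _ ≤ wordLength Q (h k : Γ) + wordLength Q (u (x k)) := hwl_mul _ _
    _ ≤ C * Real.log ((n + 1) * E) + C + b :=
        add_le_add (hd.wordLength_le_log (h k) hhk) (hub k hk)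
    _ = (3 * C ^ 2 + 1) * b + C * Real.log (n + 1) + C ^ 3 + C := by rw [hlog]; ring

theorem eventually_subset_union_of_qWordLength_lt (hN : N.Normal)
    (hd : IsExpDistortedBy Q N lenN C) (hQ : Q⁻¹ = Q) (hgen : ∀ x : Γ, ∃ n, 1 ≤ n ∧ x ∈ Q ^ n)
    {c : ℝ} (hc : 0 < c) : ∀ᶠ n : ℕ in atTop,
      {s : Fin n → Γ | ∀ k, 1 ≤ k → k ≤ n →
        (qWordLength Q N (pprodFin s k) : ℝ) < c / (2 * (3 * C ^ 2 + 1)) * √n} ⊆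
      {s | ∀ k, 1 ≤ k → k ≤ n → (wordLength Q (pprodFin s k) : ℝ) < c * √n} ∪
      {s | ∃ i, c / (2 * (3 * C ^ 2 + 1)) * √n < wordLength Q (s i)} := by
  set c₁ := c / (2 * (3 * C ^ 2 + 1))
  have hc₁c : (3 * C ^ 2 + 1) * c₁ = c / 2 := by simp only [c₁]; field_simp
  filter_upwards [eventually_mul_log_add_lt_mul_sqrt C (C ^ 3 + C) (half_pos hc)] with n hn
  intro s hs
  refine or_iff_not_imp_right.mpr fun hsbad k hk1 hkn => ?_
  simp only [Set.mem_ofPred_eq, not_exists, not_lt] at hsbad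
  have hbound := wordLength_le_of_qWordLength_le hN hd hQ hgen (pprodFin_zero s) (b := c₁ * √n)
    (fun j hj => by rw [inv_mul_pprodFin_succ s hj]; exact hsbad _)
    (fun j hj => by
      rcases Nat.eq_zero_or_pos j with rfl | hj1
      · simp [pprodFin_zero, qWordLength, N.one_mem]; positivity
      · exact (hs j hj1 hj).le) hkn
  calc (wordLength Q (pprodFin s k) : ℝ)
      ≤ (3 * C ^ 2 + 1) * (c₁ * √n) + C * Real.log (n + 1) + C ^ 3 + C := hbound
    _ < c * √n := by rw [← mul_assoc, hc₁c]; linarith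

end Distortion

theorem mul_measure_le_lintegral_of_subset {α : Type*} [MeasurableSpace α] (μ : Measure α)
    {S T : Set α} (hST : S ⊆ T) (hT : MeasurableSet T) {f : α → ℝ≥0∞} {c : ℝ≥0∞}
    (hf : ∀ x ∈ T, c ≤ f x) : c * μ S ≤ ∫⁻ x, f x ∂μ :=
  calc c * μ S ≤ c * μ T := by gcongr
    _ = ∫⁻ _ in T, c ∂μ := (setLIntegral_const T c).symm
    _ ≤ ∫⁻ x in T, f x ∂μ := setLIntegral_mono' hT hf
    _ ≤ ∫⁻ x, f x ∂μ := setLIntegral_le_lintegral T f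

theorem pow_mul_measure_lt_wordLength_le {Γ : Type*} [Group Γ] [TopologicalSpace Γ]
    [ContinuousMul Γ] [MeasurableSpace Γ] [OpensMeasurableSpace Γ] {Q U : Set Γ}
    (hU : IsOpen U) (h1U : (1 : Γ) ∈ U) (hUQ : U ⊆ Q) (hgen : ∀ x : Γ, ∃ n, 1 ≤ n ∧ x ∈ Q ^ n)
    (μ : Measure Γ) (d j : ℕ) :
    (j : ℝ≥0∞) ^ d * μ {x | j < wordLength Q x} ≤ ∫⁻ x, (wordLength Q x : ℝ≥0∞) ^ d ∂μ := by
  cases j with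
  | zero =>
    exact mul_measure_le_lintegral_of_subset μ (Set.subset_univ _) MeasurableSet.univ
      fun x _ => by gcongr; exact zero_le
  | succ i =>
    -- `Q ^ i` need not be measurable, but `Q ^ i ⊆ U * Q ^ i ⊆ Q ^ (i + 1)` and the middle
    -- set is open.
    refine mul_measure_le_lintegral_of_subset μ (T := (U * Q ^ i)ᶜ) ?_
      (hU.mul_right).measurableSet.compl fun x hx => ?_
    · intro x hx hxU
      have := wordLength_le_of_mem_pow (pow_succ' Q i ▸ Set.mul_subset_mul_right hUQ hxU)
      exact absurd hx (not_lt.mpr this)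
    · have hxQ : x ∉ Q ^ i := fun hxQ => hx ⟨1, h1U, x, hxQ, one_mul x⟩
      gcongr
      exact_mod_cast lt_wordLength_of_notMem_pow (hUQ h1U) hgen hxQ

theorem measure_pi_exists_mem_le {α ι : Type*} [MeasurableSpace α] [Fintype ι] (μ : Measure α)
    [IsProbabilityMeasure μ] (S : Set α) :
    Measure.pi (fun _ : ι => μ) {s | ∃ i, s i ∈ S} ≤ Fintype.card ι * μ S := by
  have hS : {s : ι → α | ∃ i, s i ∈ S} = ⋃ i, Function.eval i ⁻¹' S := by ext; simp
  have heval (i : ι) : Measure.pi (fun _ : ι => μ) (Function.eval i ⁻¹' S) = μ S := by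
    rw [Set.eval_preimage, Measure.pi_pi, Finset.prod_eq_single i
      (fun j _ hji => by rw [Function.update_of_ne hji, measure_univ])
      (fun h => absurd (Finset.mem_univ i) h), Function.update_self]
  calc Measure.pi (fun _ : ι => μ) {s | ∃ i, s i ∈ S}
      ≤ ∑' i, Measure.pi (fun _ : ι => μ) (Function.eval i ⁻¹' S) := hS ▸ measure_iUnion_le _
    _ = Fintype.card ι * μ S := by simp [heval, tsum_fintype]

theorem eventually_le_floor_mul_sqrt_pow_three {c : ℝ} (hc : 0 < c) :
    ∀ᶠ n : ℕ in atTop, n ≤ ⌊c * √n⌋₊ ^ 3 := by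
  have hsqrt : Tendsto (fun n : ℕ => √(n : ℝ)) atTop atTop :=
    Real.tendsto_sqrt_atTop.comp tendsto_natCast_atTop_atTop
  filter_upwards [hsqrt.eventually_ge_atTop (max (2 / c) ((2 / c) ^ 3))] with n hn
  have h2 : 2 ≤ c * √n := by
    have := (div_le_iff₀' hc).mp ((le_max_left _ _).trans hn); linarith
  have h3 : 1 ≤ (c / 2) ^ 3 * √n :=
    calc 1 = (c / 2) ^ 3 * (2 / c) ^ 3 := by field_simp
      _ ≤ (c / 2) ^ 3 * √n := by gcongr; exact (le_max_right _ _).trans hn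
  have hfloor : c * √n / 2 ≤ ⌊c * √n⌋₊ := by
    linarith [Nat.lt_floor_add_one (c * √n)]
  suffices (n : ℝ) ≤ (⌊c * √n⌋₊ : ℝ) ^ 3 by exact_mod_cast this
  calc (n : ℝ) = √n ^ 2 := (Real.sq_sqrt n.cast_nonneg).symm
    _ ≤ √n ^ 2 * ((c / 2) ^ 3 * √n) := le_mul_of_one_le_right (by positivity) h3
    _ = (c * √n / 2) ^ 3 := by ring
    _ ≤ (⌊c * √n⌋₊ : ℝ) ^ 3 := by gcongr


theorem tendsto_measure_pi_exists_mul_sqrt_lt_wordLength {Γ : Type*} [Group Γ]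
    [TopologicalSpace Γ] [ContinuousMul Γ] [MeasurableSpace Γ] [OpensMeasurableSpace Γ]
    {Q U : Set Γ} (hU : IsOpen U) (h1U : (1 : Γ) ∈ U) (hUQ : U ⊆ Q)
    (hgen : ∀ x : Γ, ∃ n, 1 ≤ n ∧ x ∈ Q ^ n) (μ : Measure Γ) [IsProbabilityMeasure μ]
    (hmom : ∫⁻ x, (wordLength Q x : ℝ≥0∞) ^ 6 ∂μ ≠ ⊤) {c : ℝ} (hc : 0 < c) :
    Tendsto (fun n : ℕ => Measure.pi (fun _ : Fin n => μ)
      {s | ∃ i, c * √n < wordLength Q (s i)}) atTop (𝓝 0) := by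
  set M := ∫⁻ x, (wordLength Q x : ℝ≥0∞) ^ 6 ∂μ
  have hlim : Tendsto (fun n : ℕ => M / n) atTop (𝓝 0) := by
    simpa [div_eq_mul_inv] using
      ENNReal.Tendsto.const_mul ENNReal.tendsto_inv_nat_nhds_zero (Or.inr hmom)
  refine tendsto_of_tendsto_of_tendsto_of_le_of_le' tendsto_const_nhds hlim
    (Eventually.of_forall fun _ => zero_le) ?_
  filter_upwards [eventually_le_floor_mul_sqrt_pow_three hc, eventually_gt_atTop 0]
    with n hn hn0
  set t := ⌊c * √n⌋₊
  have hsub : {s : Fin n → Γ | ∃ i, c * √n < wordLength Q (s i)} ⊆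
      {s | ∃ i, s i ∈ {x | t < wordLength Q x}} :=
    fun s ⟨i, hi⟩ => ⟨i, (Nat.floor_lt (by positivity)).mpr hi⟩
  have hunion := (measure_mono hsub).trans (measure_pi_exists_mem_le (ι := Fin n) μ _)
  rw [Fintype.card_fin] at hunion
  rw [ENNReal.le_div_iff_mul_le (Or.inl (by exact_mod_cast hn0.ne'))
    (Or.inl (ENNReal.natCast_ne_top n))]
  calc _ ≤ n * μ {x | t < wordLength Q x} * n := by gcongr
    _ = ((n ^ 2 : ℕ) : ℝ≥0∞) * μ {x | t < wordLength Q x} := by push_cast; ring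
    _ ≤ ((t ^ 6 : ℕ) : ℝ≥0∞) * μ {x | t < wordLength Q x} := by
      gcongr ?_ * _
      exact_mod_cast (Nat.pow_le_pow_left hn 2).trans_eq (by ring)
    _ ≤ M := by push_cast; exact pow_mul_measure_lt_wordLength_le hU h1U hUQ hgen μ 6 t

theorem stmt_12_general (Q : Set G) (m μ : MeasureTheory.Measure G) (hconv : Convention Q m μ)
    [MeasureTheory.IsProbabilityMeasure μ]
    (N : Subgroup G) (hNnormal : N.Normal)
    (lenN : N → ℝ) (hnnN : ∀ h : N, 0 ≤ lenN h)
    (hsubN : ∀ h h' : N, lenN (h * h') ≤ lenN h + lenN h')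
    (C : ℝ) (hC : 1 ≤ C)
    (hdistort : ∀ h : N,
        (1 / C) * Real.log (lenN h + 1) - C ≤ (wordLength Q (h : G) : ℝ) ∧
        (wordLength Q (h : G) : ℝ) ≤ C * Real.log (lenN h + 1) + C)
    (hquot : Cautious μ fun g => (qWordLength Q N g : ℝ)) :
    Cautious μ fun g => (wordLength Q g : ℝ) := by
  intro c hc
  obtain ⟨U, hU, h1U, hUQ, hUgen⟩ := hconv.genNbhd
  have hgen := exists_mem_pow_of_closure_eq_top_s12 hconv.qsymm (hUQ h1U)
    (eq_top_iff.mpr (hUgen ▸ Subgroup.closure_mono hUQ))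
  have hd : IsExpDistortedBy Q N lenN C := ⟨hnnN, hsubN, hC, hdistort⟩
  set c₁ := c / (2 * (3 * C ^ 2 + 1))
  have hc₁ : 0 < c₁ := by positivity
  have hbad := tendsto_measure_pi_exists_mul_sqrt_lt_wordLength hU h1U hUQ hgen μ
    (hconv.moments 6).ne hc₁
  have hcover := eventually_subset_union_of_qWordLength_lt hNnormal hd hconv.qsymm hgen hc
  calc 0 < limsup (fun n => Measure.pi (fun _ : Fin n => μ)
        {s | ∀ k, 1 ≤ k → k ≤ n → (qWordLength Q N (pprodFin s k) : ℝ) < c₁ * √n}) atTop :=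
        hquot c₁ hc₁
    _ ≤ limsup (fun n => Measure.pi (fun _ : Fin n => μ)
          {s | ∀ k, 1 ≤ k → k ≤ n → (wordLength Q (pprodFin s k) : ℝ) < c * √n} +
        Measure.pi (fun _ : Fin n => μ) {s | ∃ i, c₁ * √n < wordLength Q (s i)}) atTop :=
        limsup_le_limsup (hcover.mono fun n h => (measure_mono h).trans (measure_union_le _ _))
    _ = _ := ENNReal.limsup_add_of_right_tendsto_zero hbad _

/-- If `N ◁ G` is closed and strictly exponentially distorted and the
quotient walk `(G/N, μ̄)` is cautious, then `(G, μ)` is cautious. -/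
theorem stmt_12 (Q : Set G) (m μ : MeasureTheory.Measure G) (hconv : Convention Q m μ)
    [MeasureTheory.IsProbabilityMeasure μ]
    (N : Subgroup G) (hNnormal : N.Normal) (hNclosed : IsClosed (N : Set G))
    (lenN : N → ℝ) (hnnN : ∀ h : N, 0 ≤ lenN h) (h1N : lenN 1 = 0)
    (hinvN : ∀ h : N, lenN h⁻¹ = lenN h)
    (hsubN : ∀ h h' : N, lenN (h * h') ≤ lenN h + lenN h')
    (C : ℝ) (hC : 1 ≤ C)
    (hdistort : ∀ h : N,
        (1 / C) * Real.log (lenN h + 1) - C ≤ (wordLength Q (h : G) : ℝ) ∧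
        (wordLength Q (h : G) : ℝ) ≤ C * Real.log (lenN h + 1) + C)
    (hquot : Cautious μ fun g => (qWordLength Q N g : ℝ)) :
    Cautious μ fun g => (wordLength Q g : ℝ) :=
  stmt_12_general Q m μ hconv N hNnormal lenN hnnN hsubN C hC hdistort hquot

end
end

section
/- Let ν be a Borel probability measure on [0,1] such that 1 ∈ supp ν and ν({1}) = 0, and define γ(n) := ∫₀¹ tⁿ(1−t) dν(t) for n ∈ ℕ. Then γ(n) > 0 for every n, the sequence γ(n) is nonincreasing with γ(n) → 0, and the sequence of ratios γ(n+1)/γ(n) is nondecreasing with γ(n+1)/γ(n) → 1 as n → ∞. -/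
/-!
Write `γ n = ∫ tⁿ(1 - t) dν`. Monotonicity and the limit `γ n → 0` are pointwise facts about
`tⁿ(1 - t)` on `[0,1]`, the latter via dominated convergence. Integrating
`tⁿ(1 - t)(γ n · t - γ (n+1))² ≥ 0` gives the log-convexity `γ (n+1)² ≤ γ n γ (n+2)`, i.e. the
ratios `γ (n+1) / γ n` increase; being at most `1` they converge to some `L ≤ 1`, and
`γ n ≤ Lⁿ γ 0`. Since `1 ∈ supp ν` and `ν {1} = 0`, every `[θ, 1)` with `θ < 1` has positive mass,
so `γ n ≥ c θⁿ` with `c > 0`; hence `θ ≤ L` for all `θ < 1`, and `L = 1`.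
-/

open MeasureTheory Filter Topology Set

theorem le_of_forall_mul_pow_le {c C θ L : ℝ} (hc : 0 < c) (hθ : 0 < θ) (hL : 0 ≤ L)
    (h : ∀ n : ℕ, c * θ ^ n ≤ C * L ^ n) : θ ≤ L := by
  by_contra! hLθ
  have hlim : Tendsto (fun n : ℕ => C * (L / θ) ^ n) atTop (𝓝 0) := by
    simpa using (tendsto_pow_atTop_nhds_zero_of_lt_one (div_nonneg hL hθ.le)
      ((div_lt_one hθ).2 hLθ)).const_mul C
  have hbound (n : ℕ) : c ≤ C * (L / θ) ^ n := by
    rw [div_pow, ← mul_div_assoc, le_div_iff₀ (pow_pos hθ n)]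
    exact h n
  exact hc.not_ge (ge_of_tendsto' hlim hbound)

theorem tendsto_succ_div_self_of_forall_mul_pow_le {γ : ℕ → ℝ} (hpos : ∀ n, 0 < γ n)
    (hanti : Antitone γ) (hratio : Monotone fun n => γ (n + 1) / γ n)
    (hlow : ∀ θ, 0 < θ → θ < 1 → ∃ c, 0 < c ∧ ∀ n, c * θ ^ n ≤ γ n) :
    Tendsto (fun n => γ (n + 1) / γ n) atTop (𝓝 1) := by
  have hle_one (n : ℕ) : γ (n + 1) / γ n ≤ 1 := (div_le_one (hpos n)).2 (hanti n.le_succ)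
  have hbdd : BddAbove (range fun n => γ (n + 1) / γ n) := ⟨1, forall_mem_range.2 hle_one⟩
  set L := ⨆ n, γ (n + 1) / γ n
  have hL : 0 ≤ L := (div_pos (hpos 1) (hpos 0)).le.trans (le_ciSup hbdd 0)
  have hgeom (n : ℕ) : γ n ≤ L ^ n * γ 0 :=
    le_geom hL n fun k _ => (div_le_iff₀ (hpos k)).1 (le_ciSup hbdd k)
  have hL_eq : L = 1 := by
    refine le_antisymm (ciSup_le hle_one) (le_of_forall_lt_imp_le_of_dense fun θ hθ => ?_)
    rcases le_or_gt θ 0 with hθ0 | hθ0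
    · exact hθ0.trans hL
    obtain ⟨c, hc, hcθ⟩ := hlow θ hθ0 hθ
    exact le_of_forall_mul_pow_le hc hθ0 hL fun n =>
      (hcθ n).trans ((hgeom n).trans_eq (mul_comm _ _))
  exact hL_eq ▸ tendsto_atTop_ciSup hratio hbdd

theorem measure_Ico_pos_of_forall_measure_Icc_pos {ν : Measure ℝ}
    (hone_supp : ∀ ε : ℝ, 0 < ε → 0 < ν (Icc (1 - ε) 1)) (hone : ν {1} = 0) {θ : ℝ}
    (hθ : θ < 1) :
    0 < ν (Ico θ 1) := by
  rw [← Icc_sdiff_right, measure_sdiff_null hone]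
  simpa using hone_supp (1 - θ) (by linarith)

theorem setIntegral_Ico_one_sub_pos {ν : Measure ℝ} [IsFiniteMeasure ν] {θ : ℝ}
    (h : 0 < ν (Ico θ 1)) : 0 < ∫ t in Ico θ 1, (1 - t) ∂ν := by
  have hint : IntegrableOn (fun t : ℝ => 1 - t) (Ico θ 1) ν :=
    (by fun_prop : Continuous fun t : ℝ => 1 - t).integrableOn_Icc.mono_set Ico_subset_Icc_self
  have hnn : 0 ≤ᵐ[ν.restrict (Ico θ 1)] fun t : ℝ => 1 - t := by
    filter_upwards [ae_restrict_mem measurableSet_Ico] with t ht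
    exact sub_nonneg.2 ht.2.le
  rw [setIntegral_pos_iff_support_of_nonneg_ae hnn hint]
  exact h.trans_le (measure_mono fun t ht => ⟨sub_ne_zero.2 ht.2.ne', ht⟩)

noncomputable def oneSubMoment (ν : Measure ℝ) (n : ℕ) : ℝ :=
  ∫ t, t ^ n * (1 - t) ∂ν

section Pointwise

variable {t : ℝ}

theorem pow_mul_one_sub_nonneg (ht : t ∈ Icc (0 : ℝ) 1) (n : ℕ) : 0 ≤ t ^ n * (1 - t) :=
  mul_nonneg (pow_nonneg ht.1 n) (sub_nonneg.2 ht.2)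

theorem abs_pow_mul_one_sub_le_one (ht : t ∈ Icc (0 : ℝ) 1) (n : ℕ) :
    |t ^ n * (1 - t)| ≤ 1 := by
  rw [abs_of_nonneg (pow_mul_one_sub_nonneg ht n)]
  exact mul_le_one₀ (pow_le_one₀ ht.1 ht.2) (sub_nonneg.2 ht.2) (sub_le_self 1 ht.1)

theorem pow_succ_mul_one_sub_le (ht : t ∈ Icc (0 : ℝ) 1) (n : ℕ) :
    t ^ (n + 1) * (1 - t) ≤ t ^ n * (1 - t) :=
  mul_le_mul_of_nonneg_right (pow_le_pow_of_le_one ht.1 ht.2 n.le_succ) (sub_nonneg.2 ht.2)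

theorem tendsto_pow_mul_one_sub (ht : t ∈ Icc (0 : ℝ) 1) :
    Tendsto (fun n : ℕ => t ^ n * (1 - t)) atTop (𝓝 0) := by
  rcases ht.2.eq_or_lt with rfl | hlt
  · simp
  · simpa using (tendsto_pow_atTop_nhds_zero_of_lt_one ht.1 hlt).mul_const (1 - t)

end Pointwise

theorem oneSubMoment_nonneg {ν : Measure ℝ} (hν : ∀ᵐ t ∂ν, t ∈ Icc (0 : ℝ) 1) (n : ℕ) :
    0 ≤ oneSubMoment ν n :=
  integral_nonneg_of_ae <| by filter_upwards [hν] with t ht using pow_mul_one_sub_nonneg ht n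

section

variable {ν : Measure ℝ} [IsFiniteMeasure ν]

theorem integrable_pow_mul_one_sub (hν : ∀ᵐ t ∂ν, t ∈ Icc (0 : ℝ) 1) (n : ℕ) :
    Integrable (fun t : ℝ => t ^ n * (1 - t)) ν :=
  (integrable_const (1 : ℝ)).mono' (by fun_prop) <| by
    filter_upwards [hν] with t ht using abs_pow_mul_one_sub_le_one ht n

theorem oneSubMoment_succ_le (hν : ∀ᵐ t ∂ν, t ∈ Icc (0 : ℝ) 1) (n : ℕ) :
    oneSubMoment ν (n + 1) ≤ oneSubMoment ν n :=
  integral_mono_ae (integrable_pow_mul_one_sub hν _) (integrable_pow_mul_one_sub hν _) <| by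
    filter_upwards [hν] with t ht using pow_succ_mul_one_sub_le ht n

theorem tendsto_oneSubMoment_atTop_nhds_zero (hν : ∀ᵐ t ∂ν, t ∈ Icc (0 : ℝ) 1) :
    Tendsto (oneSubMoment ν) atTop (𝓝 0) := by
  have h := tendsto_integral_of_dominated_convergence (μ := ν) (fun _ => (1 : ℝ))
    (fun n => (integrable_pow_mul_one_sub hν n).aestronglyMeasurable) (integrable_const 1)
    (fun n => by filter_upwards [hν] with t ht using abs_pow_mul_one_sub_le_one ht n)
    (by filter_upwards [hν] with t ht using tendsto_pow_mul_one_sub ht)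
  simp only [integral_zero] at h
  exact h

theorem oneSubMoment_succ_sq_le_mul (hν : ∀ᵐ t ∂ν, t ∈ Icc (0 : ℝ) 1) (n : ℕ) :
    oneSubMoment ν (n + 1) ^ 2 ≤ oneSubMoment ν n * oneSubMoment ν (n + 2) := by
  set A := oneSubMoment ν n
  set B := oneSubMoment ν (n + 1)
  set C := oneSubMoment ν (n + 2)
  have hquad : 0 ≤ A ^ 2 * C - 2 * A * B * B + B ^ 2 * A :=
    calc 0 ≤ ∫ t, (A * t - B) ^ 2 * (t ^ n * (1 - t)) ∂ν :=
          integral_nonneg_of_ae <| by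
            filter_upwards [hν] with t ht
            exact mul_nonneg (sq_nonneg _) (pow_mul_one_sub_nonneg ht n)
      _ = ∫ t, A ^ 2 * (t ^ (n + 2) * (1 - t)) - 2 * A * B * (t ^ (n + 1) * (1 - t))
            + B ^ 2 * (t ^ n * (1 - t)) ∂ν := by
          congr 1; funext t; ring
      _ = A ^ 2 * C - 2 * A * B * B + B ^ 2 * A := by
          have hint (a : ℝ) (k : ℕ) := (integrable_pow_mul_one_sub hν k).const_mul a
          rw [integral_add ?_ (hint _ _), integral_sub (hint _ _) (hint _ _),
            integral_const_mul, integral_const_mul, integral_const_mul]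
          · rfl
          · exact (hint _ _).sub (hint _ _)
  have hB : 0 ≤ B := oneSubMoment_nonneg hν _
  have hBA : B ≤ A := oneSubMoment_succ_le hν n
  rcases (oneSubMoment_nonneg hν n).eq_or_lt with hA | hA
  · have hA0 : A = 0 := hA.symm
    have hB0 : B = 0 := le_antisymm (hA0 ▸ hBA) hB
    simp [hA0, hB0]
  · nlinarith

theorem mul_pow_le_oneSubMoment (hν : ∀ᵐ t ∂ν, t ∈ Icc (0 : ℝ) 1) {θ : ℝ} (hθ : 0 ≤ θ) (n : ℕ) :
    (∫ t in Ico θ 1, (1 - t) ∂ν) * θ ^ n ≤ oneSubMoment ν n :=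
  calc (∫ t in Ico θ 1, (1 - t) ∂ν) * θ ^ n = ∫ t in Ico θ 1, θ ^ n * (1 - t) ∂ν := by
        rw [integral_const_mul, mul_comm]
    _ ≤ ∫ t in Ico θ 1, t ^ n * (1 - t) ∂ν :=
        setIntegral_mono_on
          ((by fun_prop : Continuous fun t : ℝ => θ ^ n * (1 - t)).integrableOn_Icc.mono_set
            Ico_subset_Icc_self)
          (integrable_pow_mul_one_sub hν n).integrableOn measurableSet_Ico fun t ht =>
            mul_le_mul_of_nonneg_right (pow_le_pow_left₀ hθ ht.1 n) (sub_nonneg.2 ht.2.le)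
    _ ≤ oneSubMoment ν n :=
        setIntegral_le_integral (integrable_pow_mul_one_sub hν n) <| by
          filter_upwards [hν] with t ht using pow_mul_one_sub_nonneg ht n

end

/-- For a probability measure `ν` on `[0,1]` with `1 ∈ supp ν` and
`ν({1}) = 0`, the sequence `γ(n) = ∫ tⁿ(1-t) dν` is positive, nonincreasing, tends to `0`,
and `γ(n+1)/γ(n)` is nondecreasing and tends to `1`. -/
theorem stmt_14 (ν : MeasureTheory.Measure ℝ) [MeasureTheory.IsProbabilityMeasure ν]
    (hsupp : ν (Set.Icc (0 : ℝ) 1)ᶜ = 0)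
    (hone_supp : ∀ ε : ℝ, 0 < ε → 0 < ν (Set.Icc (1 - ε) 1))
    (hone : ν {(1 : ℝ)} = 0) :
    (∀ n : ℕ, 0 < ∫ t : ℝ, t ^ n * (1 - t) ∂ν) ∧
    (∀ n : ℕ, (∫ t : ℝ, t ^ (n + 1) * (1 - t) ∂ν) ≤ ∫ t : ℝ, t ^ n * (1 - t) ∂ν) ∧
    Filter.Tendsto (fun n : ℕ => ∫ t : ℝ, t ^ n * (1 - t) ∂ν) Filter.atTop (𝓝 0) ∧
    (∀ n : ℕ, (∫ t : ℝ, t ^ (n + 1) * (1 - t) ∂ν) / (∫ t : ℝ, t ^ n * (1 - t) ∂ν) ≤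
        (∫ t : ℝ, t ^ (n + 2) * (1 - t) ∂ν) / (∫ t : ℝ, t ^ (n + 1) * (1 - t) ∂ν)) ∧
    Filter.Tendsto
      (fun n : ℕ => (∫ t : ℝ, t ^ (n + 1) * (1 - t) ∂ν) / (∫ t : ℝ, t ^ n * (1 - t) ∂ν))
      Filter.atTop (𝓝 1) := by
  have hν : ∀ᵐ t ∂ν, t ∈ Icc (0 : ℝ) 1 := mem_ae_iff.2 hsupp
  have hlow (θ : ℝ) (hθ0 : 0 < θ) (hθ1 : θ < 1) :
      ∃ c, 0 < c ∧ ∀ n, c * θ ^ n ≤ oneSubMoment ν n :=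
    ⟨_, setIntegral_Ico_one_sub_pos
      (measure_Ico_pos_of_forall_measure_Icc_pos hone_supp hone hθ1),
      mul_pow_le_oneSubMoment hν hθ0.le⟩
  have hpos (n : ℕ) : 0 < oneSubMoment ν n := by
    obtain ⟨c, hc, hcθ⟩ := hlow (1 / 2) (by norm_num) (by norm_num)
    exact (by positivity : 0 < c * (1 / 2) ^ n).trans_le (hcθ n)
  have hratio (n : ℕ) : oneSubMoment ν (n + 1) / oneSubMoment ν n ≤
      oneSubMoment ν (n + 2) / oneSubMoment ν (n + 1) := by
    rw [div_le_div_iff₀ (hpos n) (hpos (n + 1)), ← sq, mul_comm]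
    exact oneSubMoment_succ_sq_le_mul hν n
  exact ⟨hpos, oneSubMoment_succ_le hν, tendsto_oneSubMoment_atTop_nhds_zero hν, hratio,
    tendsto_succ_div_self_of_forall_mul_pow_le hpos
      (antitone_nat_of_succ_le (oneSubMoment_succ_le hν)) (monotone_nat_of_le_succ hratio) hlow⟩
end

section
/- Assume in addition that μ = μ' * μ' for some symmetric Borel probability measure μ' on G. Let π be an orthogonal representation of G on a real Hilbert space H, let T be the operator defined weakly by ⟨T u, w⟩ = ∫_G ⟨π_g u, w⟩ dμ(g) (a positive self-adjoint contraction), and let v ∈ H be a unit vector such that ⟨Tⁿ v, v⟩ → 0 and ⟨Tⁿ v, v⟩^{1/n} → 1 as n → ∞. For n ≥ 1 define the 1-coboundary c_n : G → H by c_n(g) := Tⁿ v − π_g Tⁿ v. Then ∫_G ‖c_n(x)‖² dμ(x) = 2⟨(T^{2n} − T^{2n+1}) v, v⟩ > 0, and ‖∫_G c_n(x) dμ(x)‖² / ∫_G ‖c_n(x)‖² dμ(x) → 0 as n → ∞; that is, the L²(μ)-normalized coboundaries b_n := c_n / (∫‖c_n‖²dμ)^{1/2} are asymptotically μ-harmonic.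 -/
open MeasureTheory Filter Topology
open scoped RealInnerProductSpace ENNReal Pointwise Classical

noncomputable section

variable {G : Type*} [Group G] [TopologicalSpace G] [IsTopologicalGroup G]
  [LocallyCompactSpace G] [MeasurableSpace G] [BorelSpace G]

variable {H : Type*} [NormedAddCommGroup H] [InnerProductSpace ℝ H]

/-!
Write `a k = ⟪Tᵏ v, v⟫` and `b k = a k - a (k + 1) = ⟪(Tᵏ - Tᵏ⁺¹) v, v⟫`. The coboundary `c_n` has
mean `(Tⁿ - Tⁿ⁺¹) v`, so `‖∫ c_n dμ‖² = b (2n) - b (2n+1)`, while `∫ ‖c_n‖² dμ = 2 b (2n)`; the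
quotient is `(1 - b (2n+1) / b (2n)) / 2`.

Symmetry of `μ` makes `T` self-adjoint, and `μ = μ' * μ'` makes it the square of the self-adjoint
operator of `μ'`, so `0 ≤ T`; also `T ≤ 1`, as `π` is orthogonal and `μ` a probability measure.
Then every `Tᵏ (1 - T)` is positive, which makes `b` antitone and, by Cauchy–Schwarz for these
positive operators, log-convex. Hence the ratios `b (k+1) / b k` increase to some `L ≤ 1`. If
`L < 1`, then `b`, and with it `a`, decays like `Lᵏ`, contradicting `a k ^ (1/k) → 1`.
-/

theorem le_of_tendsto_rpow_inv_of_eventually_le {a : ℕ → ℝ} {ℓ C L : ℝ}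
    (ha : Tendsto (fun n : ℕ => a n ^ (n : ℝ)⁻¹) atTop (𝓝 ℓ)) (ha0 : ∀ n, 0 ≤ a n)
    (hC : 0 < C) (hL : 0 ≤ L) (h : ∀ᶠ n in atTop, a n ≤ C * L ^ n) : ℓ ≤ L := by
  have hCL : Tendsto (fun n : ℕ => C ^ (n : ℝ)⁻¹ * L) atTop (𝓝 L) := by
    simpa using ((Real.continuousAt_const_rpow hC.ne').tendsto.comp
      tendsto_inv_atTop_nhds_zero_nat).mul_const L
  refine le_of_tendsto_of_tendsto ha hCL ?_
  filter_upwards [h, eventually_ne_atTop 0] with n hn hn0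
  calc a n ^ (n : ℝ)⁻¹ ≤ (C * L ^ n) ^ (n : ℝ)⁻¹ := by gcongr; exact ha0 n
    _ = C ^ (n : ℝ)⁻¹ * L := by
      rw [Real.mul_rpow hC.le (by positivity), Real.pow_rpow_inv_natCast hL hn0]

theorem le_mul_pow_of_sub_succ_le {a : ℕ → ℝ} {C L : ℝ} (ha : Tendsto a atTop (𝓝 0))
    (hL0 : 0 ≤ L) (hL1 : L < 1) (h : ∀ k, a k - a (k + 1) ≤ C * L ^ k) (k : ℕ) :
    a k ≤ C / (1 - L) * L ^ k := by
  have hL : 0 < 1 - L := sub_pos.2 hL1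
  have hmono : Monotone fun k => a k - C / (1 - L) * L ^ k := by
    refine monotone_nat_of_le_succ fun k => ?_
    have hk : C / (1 - L) * L ^ k - C / (1 - L) * L ^ (k + 1) = C * L ^ k := by
      field_simp; ring
    linarith [h k]
  have hlim : Tendsto (fun k => a k - C / (1 - L) * L ^ k) atTop (𝓝 0) := by
    simpa using ha.sub ((tendsto_pow_atTop_nhds_zero_of_lt_one hL0 hL1).const_mul (C / (1 - L)))
  linarith [hmono.ge_of_tendsto hlim k]

section Moments

variable {a b : ℕ → ℝ}

theorem nonneg_of_sub_succ_eq_of_antitone (hab : ∀ k, a k - a (k + 1) = b k)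
    (ha : Tendsto a atTop (𝓝 0)) (hb : Antitone b) (k : ℕ) : 0 ≤ b k := by
  have hb0 : Tendsto b atTop (𝓝 0) := by
    simpa [hab] using ha.sub (ha.comp (tendsto_add_atTop_nat 1))
  exact hb.le_of_tendsto hb0 k

theorem nonneg_of_tendsto_zero_of_sub_succ_eq (hab : ∀ k, a k - a (k + 1) = b k)
    (ha : Tendsto a atTop (𝓝 0)) (hb : ∀ k, 0 ≤ b k) (k : ℕ) : 0 ≤ a k :=
  (antitone_nat_of_succ_le fun j => by linarith [hab j, hb j]).le_of_tendsto ha k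

theorem pos_of_tendsto_rpow_inv (hab : ∀ k, a k - a (k + 1) = b k) (ha : Tendsto a atTop (𝓝 0))
    (ha1 : Tendsto (fun n : ℕ => a n ^ (n : ℝ)⁻¹) atTop (𝓝 1)) (hb : Antitone b) (k : ℕ) :
    0 < b k := by
  have hb0 := nonneg_of_sub_succ_eq_of_antitone hab ha hb
  refine (hb0 k).lt_of_ne fun hk => ?_
  have hbj : ∀ j ≥ k, b j = 0 := fun j hj => le_antisymm (hk ▸ hb hj) (hb0 j)
  have haj : ∀ j ≥ k, a j = a k :=
    Nat.le_induction rfl fun j hj ih => by linarith [hab j, hbj j hj]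
  have hak : a k = 0 := tendsto_nhds_unique
    (tendsto_const_nhds.congr' (eventually_atTop.2 ⟨k, fun j hj => (haj j hj).symm⟩)) ha
  have : (1 : ℝ) ≤ 0 :=
    le_of_tendsto_rpow_inv_of_eventually_le ha1 (nonneg_of_tendsto_zero_of_sub_succ_eq hab ha hb0)
      one_pos le_rfl (eventually_atTop.2 ⟨k, fun j hj => by rw [haj j hj, hak]; positivity⟩)
  linarith

theorem tendsto_div_of_tendsto_rpow_inv (hab : ∀ k, a k - a (k + 1) = b k)
    (ha : Tendsto a atTop (𝓝 0)) (ha1 : Tendsto (fun n : ℕ => a n ^ (n : ℝ)⁻¹) atTop (𝓝 1))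
    (hb : Antitone b) (hlog : ∀ k, b (k + 1) ^ 2 ≤ b k * b (k + 2)) :
    Tendsto (fun k => b (k + 1) / b k) atTop (𝓝 1) := by
  have hpos := pos_of_tendsto_rpow_inv hab ha ha1 hb
  set s : ℕ → ℝ := fun k => b (k + 1) / b k with hs
  have hs_mono : Monotone s := monotone_nat_of_le_succ fun k => by
    rw [hs, div_le_div_iff₀ (hpos k) (hpos (k + 1))]
    nlinarith [hlog k]
  have hs_le : ∀ k, s k ≤ 1 := fun k => (div_le_one (hpos k)).2 (hb k.le_succ)
  have hbdd : BddAbove (Set.range s) := ⟨1, Set.forall_mem_range.2 hs_le⟩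
  have hlim := tendsto_atTop_ciSup hs_mono hbdd
  set L := ⨆ k, s k
  suffices 1 ≤ L by rwa [show L = 1 from le_antisymm (ciSup_le hs_le) this] at hlim
  by_contra! hL
  have hL0 : 0 ≤ L := (div_pos (hpos 1) (hpos 0)).le.trans (le_ciSup hbdd 0)
  have hbL : ∀ k, b k ≤ b 0 * L ^ k := by
    intro k
    induction k with
    | zero => simp
    | succ k ih =>
      calc b (k + 1) = s k * b k := (div_mul_cancel₀ _ (hpos k).ne').symm
        _ ≤ L * (b 0 * L ^ k) := mul_le_mul (le_ciSup hbdd k) ih (hpos k).le hL0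
        _ = b 0 * L ^ (k + 1) := by ring
  have haL := le_mul_pow_of_sub_succ_le ha hL0 hL fun k => (hab k).trans_le (hbL k)
  have := le_of_tendsto_rpow_inv_of_eventually_le ha1
    (nonneg_of_tendsto_zero_of_sub_succ_eq hab ha fun k => (hpos k).le)
    (div_pos (hpos 0) (sub_pos.2 hL)) hL0 (Eventually.of_forall haL)
  linarith

end Moments

namespace IsSelfAdjoint

variable {E : Type*} [NormedAddCommGroup E] [InnerProductSpace ℝ E] [CompleteSpace E]
  {T : E →L[ℝ] E}

theorem inner_left_eq_inner_right (hT : IsSelfAdjoint T) (x y : E) : ⟪T x, y⟫ = ⟪x, T y⟫ :=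
  hT.isSymmetric x y

theorem inner_pow_sub_pow_succ_apply_pow (hT : IsSelfAdjoint T) (v : E) (n : ℕ) :
    ⟪(T ^ n - T ^ (n + 1)) v, (T ^ n) v⟫ = ⟪(T ^ (2 * n) - T ^ (2 * n + 1)) v, v⟫ := by
  rw [← (hT.pow n).inner_left_eq_inner_right, ← mul_apply_eq_comp, mul_sub, ← pow_add,
    ← pow_add, two_mul, add_assoc]

theorem norm_pow_sub_pow_succ_apply_sq (hT : IsSelfAdjoint T) (v : E) (n : ℕ) :
    ‖(T ^ n - T ^ (n + 1)) v‖ ^ 2 =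
      ⟪(T ^ (2 * n) - T ^ (2 * n + 1)) v, v⟫ - ⟪(T ^ (2 * n + 1) - T ^ (2 * n + 2)) v, v⟫ := by
  rw [← real_inner_self_eq_norm_sq, ← ((hT.pow n).sub (hT.pow (n + 1))).inner_left_eq_inner_right,
    ← mul_apply_eq_comp, ← inner_sub_left, ← sub_apply]
  congr 2
  simp only [sub_mul, mul_sub, ← pow_add]
  ring_nf

end IsSelfAdjoint

namespace ContinuousLinearMap

variable {E : Type*} [NormedAddCommGroup E] [InnerProductSpace ℝ E]

theorem IsPositive.inner_sq_le {P : E →L[ℝ] E} (hP : P.IsPositive) (x y : E) :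
    ⟪P x, y⟫ ^ 2 ≤ ⟪P x, x⟫ * ⟪P y, y⟫ :=
  LinearMap.BilinForm.apply_sq_le_of_symm ((innerₗ E).comp (P : E →ₗ[ℝ] E))
    hP.inner_nonneg_left ⟨fun x y => by
      simp only [LinearMap.comp_apply, innerₗ_apply_apply, coe_coe]
      rw [hP.inner_left_eq_inner_right, real_inner_comm, RingHom.id_apply]⟩ x y

variable [CompleteSpace E] {T : E →L[ℝ] E}

theorem IsPositive.mul_one_sub (hT : T.IsPositive) (hT1 : (1 - T).IsPositive) :
    (T * (1 - T)).IsPositive := by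
  -- `T (1 - T) = (1 - T) T (1 - T) + T (1 - T) T`, a sum of conjugates of positive operators
  have h := (hT.adjoint_conj (1 - T)).add (hT1.adjoint_conj T)
  rw [hT.isSelfAdjoint.adjoint_eq, hT1.isSelfAdjoint.adjoint_eq, ← mul_def, ← mul_def,
    ← mul_def, ← mul_def] at h
  convert h using 1
  noncomm_ring

theorem IsPositive.pow_mul_of_commute {A : E →L[ℝ] E} (hA : A.IsPositive)
    (hTA : (T * A).IsPositive) (hT : IsSelfAdjoint T) (hc : Commute T A) (k : ℕ) :
    (T ^ k * A).IsPositive := by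
  induction k using Nat.twoStepInduction with
  | zero => simpa using hA
  | one => simpa using hTA
  | more k ih _ =>
    have h := ih.adjoint_conj T
    rw [hT.adjoint_eq, ← mul_def, ← mul_def] at h
    convert h using 1
    rw [pow_succ', pow_succ, mul_assoc, mul_assoc, mul_assoc, hc.eq]

theorem IsPositive.pow (hT : T.IsPositive) (k : ℕ) : (T ^ k).IsPositive := by
  simpa using isPositive_one.pow_mul_of_commute (by simpa using hT) hT.isSelfAdjoint
    (Commute.one_right T) k

theorem IsPositive.pow_sub_pow_succ (hT : T.IsPositive) (hT1 : (1 - T).IsPositive) (k : ℕ) :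
    (T ^ k - T ^ (k + 1)).IsPositive := by
  simpa [mul_sub, pow_succ] using hT1.pow_mul_of_commute (hT.mul_one_sub hT1)
    hT.isSelfAdjoint ((Commute.one_right T).sub_right (Commute.refl T)) k

theorem IsPositive.antitone_inner_pow_sub_pow_succ (hT : T.IsPositive)
    (hT1 : (1 - T).IsPositive) (v : E) :
    Antitone fun k => ⟪(T ^ k - T ^ (k + 1)) v, v⟫ := by
  refine antitone_nat_of_succ_le fun k => ?_
  have h := ((hT.pow k).adjoint_conj (1 - T)).inner_nonneg_left v
  rw [hT1.isSelfAdjoint.adjoint_eq, ← mul_def, ← mul_def] at h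
  have hconj : (1 - T) * (T ^ k * (1 - T)) =
      (T ^ k - T ^ (k + 1)) - (T ^ (k + 1) - T ^ (k + 2)) := by
    rw [sub_mul, one_mul, ← mul_assoc, (Commute.self_pow T k).eq, pow_succ, pow_succ, pow_succ]
    noncomm_ring
  rw [hconj, sub_apply, inner_sub_left] at h
  linarith

theorem IsPositive.inner_pow_sub_pow_succ_sq_le (hT : T.IsPositive)
    (hT1 : (1 - T).IsPositive) (v : E) (k : ℕ) :
    ⟪(T ^ (k + 1) - T ^ (k + 2)) v, v⟫ ^ 2 ≤
      ⟪(T ^ k - T ^ (k + 1)) v, v⟫ * ⟪(T ^ (k + 2) - T ^ (k + 3)) v, v⟫ := by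
  have hl : T * (T ^ k - T ^ (k + 1)) = T ^ (k + 1) - T ^ (k + 2) := by
    rw [mul_sub, ← pow_succ', ← pow_succ']
  have hlr : T * (T ^ k - T ^ (k + 1)) * T = T ^ (k + 2) - T ^ (k + 3) := by
    rw [hl, sub_mul, ← pow_succ, ← pow_succ]
  have h1 : ⟪(T ^ k - T ^ (k + 1)) v, T v⟫ = ⟪(T ^ (k + 1) - T ^ (k + 2)) v, v⟫ := by
    rw [← hl, mul_apply_eq_comp, hT.inner_left_eq_inner_right]
  have h2 : ⟪(T ^ k - T ^ (k + 1)) (T v), T v⟫ = ⟪(T ^ (k + 2) - T ^ (k + 3)) v, v⟫ := by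
    rw [← hlr, mul_apply_eq_comp, mul_apply_eq_comp, hT.inner_left_eq_inner_right]
  simpa only [h1, h2] using (hT.pow_sub_pow_succ hT1 k).inner_sq_le v (T v)

theorem IsPositive.inner_pow_sub_pow_succ_pos (hT : T.IsPositive) (hT1 : (1 - T).IsPositive)
    {v : E} (hv0 : Tendsto (fun n : ℕ => ⟪(T ^ n) v, v⟫) atTop (𝓝 0))
    (hv1 : Tendsto (fun n : ℕ => ⟪(T ^ n) v, v⟫ ^ (n : ℝ)⁻¹) atTop (𝓝 1)) (k : ℕ) :
    0 < ⟪(T ^ k - T ^ (k + 1)) v, v⟫ :=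
  pos_of_tendsto_rpow_inv (fun _ => by rw [sub_apply, inner_sub_left]) hv0 hv1
    (hT.antitone_inner_pow_sub_pow_succ hT1 v) k

theorem IsPositive.tendsto_inner_pow_sub_pow_succ_div (hT : T.IsPositive)
    (hT1 : (1 - T).IsPositive) {v : E} (hv0 : Tendsto (fun n : ℕ => ⟪(T ^ n) v, v⟫) atTop (𝓝 0))
    (hv1 : Tendsto (fun n : ℕ => ⟪(T ^ n) v, v⟫ ^ (n : ℝ)⁻¹) atTop (𝓝 1)) :
    Tendsto (fun k => ⟪(T ^ (k + 1) - T ^ (k + 2)) v, v⟫ / ⟪(T ^ k - T ^ (k + 1)) v, v⟫)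
      atTop (𝓝 1) :=
  tendsto_div_of_tendsto_rpow_inv (fun _ => by rw [sub_apply, inner_sub_left]) hv0 hv1
    (hT.antitone_inner_pow_sub_pow_succ hT1 v) (hT.inner_pow_sub_pow_succ_sq_le hT1 v)

end ContinuousLinearMap

theorem Continuous.stronglyMeasurable_of_sigmaCompactSpace {X Y : Type*} [TopologicalSpace X]
    [SigmaCompactSpace X] [MeasurableSpace X] [OpensMeasurableSpace X] [TopologicalSpace Y]
    [TopologicalSpace.PseudoMetrizableSpace Y] {f : X → Y} (hf : Continuous f) :
    StronglyMeasurable f := by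
  borelize Y
  refine stronglyMeasurable_iff_measurable_separable.2 ⟨hf.measurable, ?_⟩
  rw [← Set.image_univ, ← iUnion_compactCovering, Set.image_iUnion]
  exact .iUnion fun n => ((isCompact_compactCovering X n).image hf).isSeparable

section Orbit

variable {G : Type*} [Group G]

theorem sigmaCompactSpace_of_isCompact_closure [TopologicalSpace G] [IsTopologicalGroup G]
    {Q : Set G} (hQ : IsCompact (closure Q)) (hgen : Subgroup.closure Q = ⊤) :
    SigmaCompactSpace G := by
  set K := closure Q ∪ (closure Q)⁻¹
  have hK : ∀ n : ℕ, IsCompact (K ^ n) := fun n => by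
    induction n with
    | zero => simp
    | succ n ih => rw [pow_succ]; exact ih.mul (hQ.union hQ.inv)
  refine ⟨⟨fun n => K ^ n, hK, Set.eq_univ_of_forall fun x => ?_⟩⟩
  have hx : x ∈ Subgroup.closure Q := hgen ▸ Subgroup.mem_top x
  induction hx using Subgroup.closure_induction with
  | mem y hy => exact Set.mem_iUnion.2 ⟨1, by simpa [K] using Or.inl (subset_closure hy)⟩
  | one => exact Set.mem_iUnion.2 ⟨0, by simp⟩
  | mul y z _ _ hy hz =>
    obtain ⟨n, hn⟩ := Set.mem_iUnion.1 hy
    obtain ⟨k, hk⟩ := Set.mem_iUnion.1 hz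
    exact Set.mem_iUnion.2 ⟨n + k, pow_add K n k ▸ Set.mul_mem_mul hn hk⟩
  | inv y _ hy =>
    obtain ⟨n, hn⟩ := Set.mem_iUnion.1 hy
    refine Set.mem_iUnion.2 ⟨n, ?_⟩
    have hKinv : K⁻¹ = K := by simp only [K, Set.union_inv, inv_inv, Set.union_comm]
    simpa [← inv_pow, hKinv] using Set.inv_mem_inv.2 hn

theorem Convention.sigmaCompactSpace [TopologicalSpace G] [IsTopologicalGroup G]
    [MeasurableSpace G] {Q : Set G} {m μ : Measure G} (h : Convention Q m μ) :
    SigmaCompactSpace G := by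
  obtain ⟨U, -, -, hUQ, hU⟩ := h.genNbhd
  exact sigmaCompactSpace_of_isCompact_closure h.relCompact
    (top_le_iff.1 (hU ▸ Subgroup.closure_mono hUQ))

theorem aemeasurable_mul_of_neZero_mconv [MeasurableSpace G] {μ₁ μ₂ : Measure G}
    [NeZero (mconv μ₁ μ₂)] :
    AEMeasurable (fun p : G × G => p.1 * p.2) (μ₁.prod μ₂) := by
  by_contra h
  exact NeZero.ne (mconv μ₁ μ₂) (Measure.map_of_not_aemeasurable h)

variable {π : G →* (H ≃ₗᵢ[ℝ] H)}

theorem inner_map_eq_inner_map_inv (g : G) (u w : H) : ⟪π g u, w⟫ = ⟪u, π g⁻¹ w⟫ := by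
  rw [(π g).inner_map_eq_flip, map_inv, LinearIsometryEquiv.coe_inv]

theorem integral_inner_orbit_comm [MeasurableSpace G] [MeasurableInv G] {μ : Measure G}
    [μ.IsInvInvariant] (u w : H) :
    ∫ g, ⟪π g u, w⟫ ∂μ = ∫ g, ⟪π g w, u⟫ ∂μ := by
  have h : ∀ g, ⟪π g u, w⟫ = ⟪π g⁻¹ w, u⟫ := fun g => by
    rw [inner_map_eq_inner_map_inv, real_inner_comm]
  simp_rw [h]
  exact integral_inv_eq_self (fun g => ⟪π g w, u⟫) μ

theorem integral_inner_orbit_self_le [MeasurableSpace G] {μ : Measure G} [IsProbabilityMeasure μ]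
    (u : H) :
    ∫ g, ⟪π g u, u⟫ ∂μ ≤ ‖u‖ ^ 2 := by
  have hbound : ∀ g, ‖⟪π g u, u⟫‖ ≤ ‖u‖ ^ 2 := fun g =>
    (norm_inner_le_norm (π g u) u).trans_eq (by rw [(π g).norm_map, sq])
  calc ∫ g, ⟪π g u, u⟫ ∂μ ≤ ‖∫ g, ⟪π g u, u⟫ ∂μ‖ := Real.le_norm_self _
    _ ≤ ‖u‖ ^ 2 * μ.real Set.univ := norm_integral_le_of_norm_le_const (.of_forall hbound)
    _ = ‖u‖ ^ 2 := by simp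

variable [TopologicalSpace G] [SigmaCompactSpace G] [MeasurableSpace G] [OpensMeasurableSpace G]
  {μ : Measure G} [IsFiniteMeasure μ]

theorem integrable_orbit (hπ : ∀ v : H, Continuous fun g : G => π g v) (u : H) :
    Integrable (fun g => π g u) μ :=
  .of_bound (hπ u).stronglyMeasurable_of_sigmaCompactSpace.aestronglyMeasurable ‖u‖
    (.of_forall fun g => (π g).norm_map u |>.le)

variable [CompleteSpace H]

theorem inner_integral_orbit (hπ : ∀ v : H, Continuous fun g : G => π g v)
    (u w : H) : ⟪∫ g, π g u ∂μ, w⟫ = ∫ g, ⟪π g u, w⟫ ∂μ := by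
  rw [real_inner_comm, ← integral_inner (integrable_orbit hπ u)]
  simp_rw [real_inner_comm w]

theorem integral_inner_orbit_mconv {μ₁ : Measure G} [IsFiniteMeasure μ₁]
    [NeZero (mconv μ₁ μ)] (hπ : ∀ v : H, Continuous fun g : G => π g v) (u w : H) :
    ∫ g, ⟪π g u, w⟫ ∂(mconv μ₁ μ) = ∫ g, ⟪π g (∫ h, π h u ∂μ), w⟫ ∂μ₁ := by
  have hmul := aemeasurable_mul_of_neZero_mconv (μ₁ := μ₁) (μ₂ := μ)
  have hcont : Continuous fun g => ⟪π g u, w⟫ := (hπ u).inner continuous_const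
  have hint : Integrable (fun p : G × G => ⟪π (p.1 * p.2) u, w⟫) (μ₁.prod μ) := by
    refine .of_bound (hcont.measurable.comp_aemeasurable hmul).aestronglyMeasurable
      (‖u‖ * ‖w‖) (.of_forall fun p => ?_)
    calc ‖⟪π (p.1 * p.2) u, w⟫‖ ≤ ‖π (p.1 * p.2) u‖ * ‖w‖ := norm_inner_le_norm _ _
      _ = ‖u‖ * ‖w‖ := by rw [(π _).norm_map]
  rw [mconv, integral_map hmul hcont.measurable.aestronglyMeasurable, integral_prod _ hint]
  refine integral_congr_ae (.of_forall fun g => ?_)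
  simp_rw [map_mul, LinearIsometryEquiv.coe_mul, Function.comp_apply,
    inner_map_eq_inner_map_inv g, inner_integral_orbit hπ]

end Orbit

section AveragingOperator

variable {G : Type*} [Group G] [MeasurableSpace G] {π : G →* (H ≃ₗᵢ[ℝ] H)} {μ : Measure G}
  [CompleteSpace H] {T : H →L[ℝ] H}

theorem isSelfAdjoint_of_inner_eq_integral [MeasurableInv G] [μ.IsInvInvariant]
    (hT : ∀ u w : H, ⟪T u, w⟫ = ∫ g, ⟪π g u, w⟫ ∂μ) : IsSelfAdjoint T :=
  ContinuousLinearMap.isSelfAdjoint_iff_isSymmetric.2 fun u w => by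
    rw [ContinuousLinearMap.coe_coe, ← real_inner_comm u, hT, hT, integral_inner_orbit_comm]

theorem isPositive_one_sub_of_inner_eq_integral [MeasurableInv G] [μ.IsInvInvariant]
    [IsProbabilityMeasure μ] (hT : ∀ u w : H, ⟪T u, w⟫ = ∫ g, ⟪π g u, w⟫ ∂μ) :
    (1 - T).IsPositive := by
  refine (ContinuousLinearMap.isPositive_iff' _).2
    ⟨.sub (.one _) (isSelfAdjoint_of_inner_eq_integral hT), fun u => ?_⟩
  rw [sub_apply, inner_sub_left, one_apply_eq_self, hT,
    real_inner_self_eq_norm_sq, sub_nonneg]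
  exact integral_inner_orbit_self_le u

variable [TopologicalSpace G] [SigmaCompactSpace G] [OpensMeasurableSpace G]

theorem isPositive_of_inner_eq_integral_mconv [MeasurableInv G] [IsFiniteMeasure μ]
    [μ.IsInvInvariant] [(mconv μ μ).IsInvInvariant] [NeZero (mconv μ μ)]
    (hπ : ∀ v : H, Continuous fun g : G => π g v)
    (hT : ∀ u w : H, ⟪T u, w⟫ = ∫ g, ⟪π g u, w⟫ ∂(mconv μ μ)) : T.IsPositive := by
  refine (ContinuousLinearMap.isPositive_iff' _).2
    ⟨isSelfAdjoint_of_inner_eq_integral hT, fun u => ?_⟩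
  rw [hT, integral_inner_orbit_mconv hπ, integral_inner_orbit_comm, ← inner_integral_orbit hπ]
  exact real_inner_self_nonneg

variable [IsProbabilityMeasure μ] (hπ : ∀ v : H, Continuous fun g : G => π g v)
  (hT : ∀ u w : H, ⟪T u, w⟫ = ∫ g, ⟪π g u, w⟫ ∂μ)
include hπ hT

theorem integral_coboundary (w : H) : ∫ g, (w - π g w) ∂μ = w - T w := by
  have hTw : ∫ g, π g w ∂μ = T w :=
    ext_inner_right ℝ fun u => by rw [inner_integral_orbit hπ, hT]
  rw [integral_sub (integrable_const w) (integrable_orbit hπ w), integral_const, probReal_univ,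
    one_smul, hTw]

theorem integral_norm_coboundary_sq (w : H) :
    ∫ g, ‖w - π g w‖ ^ 2 ∂μ = 2 * ⟪w - T w, w⟫ := by
  have hpt : ∀ g, ‖w - π g w‖ ^ 2 = 2 * ⟪w - π g w, w⟫ := fun g => by
    rw [norm_sub_sq_real, (π g).norm_map, inner_sub_left, real_inner_self_eq_norm_sq,
      real_inner_comm]
    ring
  simp_rw [hpt]
  rw [integral_const_mul, ← integral_coboundary hπ hT, real_inner_comm,
    ← integral_inner (f := fun g => w - π g w) ((integrable_const w).sub (integrable_orbit hπ w))]
  simp_rw [real_inner_comm w]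

end AveragingOperator

theorem stmt_15_general (Q : Set G) (m μ μ' : MeasureTheory.Measure G) (hconv : Convention Q m μ)
    (hμ' : MeasureTheory.IsProbabilityMeasure μ') (hμ'symm : μ'.map (fun x => x⁻¹) = μ')
    (hsq : μ = mconv μ' μ')
    [CompleteSpace H]
    (π : G →* (H ≃ₗᵢ[ℝ] H)) (hπ : ∀ v : H, Continuous fun g : G => π g v)
    (T : H →L[ℝ] H) (hT : ∀ u w : H, ⟪T u, w⟫ = ∫ g, ⟪π g u, w⟫ ∂μ)
    (v : H)
    (hv0 : Filter.Tendsto (fun n : ℕ => ⟪(T ^ n) v, v⟫) Filter.atTop (𝓝 0))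
    (hv1 : Filter.Tendsto (fun n : ℕ => ⟪(T ^ n) v, v⟫ ^ ((n : ℝ)⁻¹)) Filter.atTop (𝓝 1)) :
    (∀ n : ℕ, 1 ≤ n →
      (∫ x, ‖(T ^ n) v - π x ((T ^ n) v)‖ ^ 2 ∂μ)
          = 2 * ⟪(T ^ (2 * n) - T ^ (2 * n + 1)) v, v⟫ ∧
      0 < ∫ x, ‖(T ^ n) v - π x ((T ^ n) v)‖ ^ 2 ∂μ) ∧
    Filter.Tendsto (fun n : ℕ =>
        ‖∫ x, ((T ^ n) v - π x ((T ^ n) v)) ∂μ‖ ^ 2 /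
          ∫ x, ‖(T ^ n) v - π x ((T ^ n) v)‖ ^ 2 ∂μ) Filter.atTop (𝓝 0) := by
  have := hconv.prob
  have := hconv.sigmaCompactSpace
  have : μ.IsInvInvariant := ⟨hconv.msymm⟩
  have : μ'.IsInvInvariant := ⟨hμ'symm⟩
  have hT0 : T.IsPositive := by
    subst hsq
    exact isPositive_of_inner_eq_integral_mconv hπ hT
  have hT1 : (1 - T).IsPositive := isPositive_one_sub_of_inner_eq_integral hT
  have hTpow : ∀ n, T ((T ^ n) v) = (T ^ (n + 1)) v := fun n => by
    rw [pow_succ', mul_apply_eq_comp]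
  have hnorm : ∀ n, ∫ x, ‖(T ^ n) v - π x ((T ^ n) v)‖ ^ 2 ∂μ =
      2 * ⟪(T ^ (2 * n) - T ^ (2 * n + 1)) v, v⟫ := fun n => by
    rw [integral_norm_coboundary_sq hπ hT, hTpow, ← sub_apply,
      hT0.isSelfAdjoint.inner_pow_sub_pow_succ_apply_pow]
  have hmean : ∀ n, ‖∫ x, ((T ^ n) v - π x ((T ^ n) v)) ∂μ‖ ^ 2 =
      ⟪(T ^ (2 * n) - T ^ (2 * n + 1)) v, v⟫ - ⟪(T ^ (2 * n + 1) - T ^ (2 * n + 2)) v, v⟫ :=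
    fun n => by
      rw [integral_coboundary hπ hT, hTpow, ← sub_apply,
        hT0.isSelfAdjoint.norm_pow_sub_pow_succ_apply_sq]
  have hpos := hT0.inner_pow_sub_pow_succ_pos hT1 hv0 hv1
  refine ⟨fun n _ => ⟨hnorm n, hnorm n ▸ mul_pos two_pos (hpos _)⟩, ?_⟩
  have hlim := ((tendsto_const_nhds (x := (1 : ℝ))).sub
    ((hT0.tendsto_inner_pow_sub_pow_succ_div hT1 hv0 hv1).comp
      (tendsto_id.const_mul_atTop' two_pos))).div_const 2
  rw [sub_self, zero_div] at hlim
  refine hlim.congr fun n => ?_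
  rw [hmean, hnorm, Function.comp_apply, id, one_sub_div (hpos (2 * n)).ne']
  ring

/-- For the coboundaries `c_n(g) = Tⁿv - π_g Tⁿv` one has
`∫‖c_n‖² dμ = 2⟨(T^{2n} - T^{2n+1})v, v⟩ > 0`, and the normalized coboundaries are
asymptotically `μ`-harmonic. -/
theorem stmt_15 (Q : Set G) (m μ μ' : MeasureTheory.Measure G) (hconv : Convention Q m μ)
    (hμ' : MeasureTheory.IsProbabilityMeasure μ') (hμ'symm : μ'.map (fun x => x⁻¹) = μ')
    (hsq : μ = mconv μ' μ')
    [CompleteSpace H]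
    (π : G →* (H ≃ₗᵢ[ℝ] H)) (hπ : ∀ v : H, Continuous fun g : G => π g v)
    (T : H →L[ℝ] H) (hT : ∀ u w : H, ⟪T u, w⟫ = ∫ g, ⟪π g u, w⟫ ∂μ)
    (v : H) (hv : ‖v‖ = 1)
    (hv0 : Filter.Tendsto (fun n : ℕ => ⟪(T ^ n) v, v⟫) Filter.atTop (𝓝 0))
    (hv1 : Filter.Tendsto (fun n : ℕ => ⟪(T ^ n) v, v⟫ ^ ((n : ℝ)⁻¹)) Filter.atTop (𝓝 1)) :
    (∀ n : ℕ, 1 ≤ n →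
      (∫ x, ‖(T ^ n) v - π x ((T ^ n) v)‖ ^ 2 ∂μ)
          = 2 * ⟪(T ^ (2 * n) - T ^ (2 * n + 1)) v, v⟫ ∧
      0 < ∫ x, ‖(T ^ n) v - π x ((T ^ n) v)‖ ^ 2 ∂μ) ∧
    Filter.Tendsto (fun n : ℕ =>
        ‖∫ x, ((T ^ n) v - π x ((T ^ n) v)) ∂μ‖ ^ 2 /
          ∫ x, ‖(T ^ n) v - π x ((T ^ n) v)‖ ^ 2 ∂μ) Filter.atTop (𝓝 0) :=
  stmt_15_general Q m μ μ' hconv hμ' hμ'symm hsq π hπ T hT v hv0 hv1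
end
end
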